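/- arXiv:1905.12950 — 9 statements merged into one kernel-verified Lean document; each statement's English description precedes it below -/
import Mathlib

section
/- Fix integers K, T ≥ 2, S ∈ [T], n ≥ 1 and set η = min{1/5, √((S ln T + n ln K)/T)}. Let ℓ_1,…,ℓ_T ∈ [−1,1]^K be arbitrary loss vectors, let w_1,…,w_T ∈ Δ_K and z_t(i) ∈ [0,1] for all t ∈ [T], i ∈ [K] with Σ_j z_t(j)w_t(j) > 0, and define p_t(i) = z_t(i)w_t(i)/Σ_j z_t(j)w_t(j), r_t(i) = ⟨p_t, ℓ_t⟩ − ℓ_t(i), and c_t(i) = −z_t(i)r_t(i). Assume the sequence (w_t) satisfies Condition 1 with constant C for the losses (c_t), and for every i ∈ [K] the sequence q_t = (1 − z_t(i), z_t(i)) satisfies Condition 2 with constant C and parameter η for the losses h_t = (0, 5η − r_t(i)). Then there is a constant C' depending only on C such that for every benchmark sequence i_1,…,i_T ∈ [K] with at most S−1 switches and at most n distinct actions, Σ_{t=1}^T r_t(i_t) ≤ C'·√(T(S ln T + n ln K)). -/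
set_option maxHeartbeats 1600000 in
/-- Theorem 1 of the paper, reduction form.
Given the confidence-rated reduction (Algorithm 1) with sub-routines satisfying
Condition 1 (static regret for `𝒜`) and Condition 2 (switching regret for each `𝒜ᵢ`)
with constant `C`, and `η = min{1/5, √((S ln T + n ln K)/T)}`, the switching regret
against any benchmark sequence with at most `S-1` switches and at most `n` distinct
actions is at most `C' √(T (S ln T + n ln K))` for a constant `C'` depending only on `C`. -/
theorem stmt_0 (C : ℝ) (hC : 0 < C) :
    ∃ C' : ℝ, 0 < C' ∧
      ∀ (K T S n : ℕ), 2 ≤ K → 2 ≤ T → 1 ≤ S → S ≤ T → 1 ≤ n →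
      ∀ η : ℝ,
        η = min (1 / 5)
          (Real.sqrt (((S : ℝ) * Real.log T + (n : ℝ) * Real.log K) / T)) →
      ∀ ℓ w z p r c : ℕ → Fin K → ℝ,
        -- losses in [-1,1]
        (∀ t ∈ Finset.Icc 1 T, ∀ i, |ℓ t i| ≤ 1) →
        -- w_t ∈ Δ_K
        (∀ t ∈ Finset.Icc 1 T, (∀ i, 0 ≤ w t i) ∧ (∑ i, w t i) = 1) →
        -- confidences z_t(i) ∈ [0,1]
        (∀ t ∈ Finset.Icc 1 T, ∀ i, 0 ≤ z t i ∧ z t i ≤ 1) →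
        (∀ t ∈ Finset.Icc 1 T, 0 < ∑ j, z t j * w t j) →
        -- p_t(i) = z_t(i) w_t(i) / Σ_j z_t(j) w_t(j)
        (∀ t ∈ Finset.Icc 1 T, ∀ i, p t i = z t i * w t i / ∑ j, z t j * w t j) →
        -- r_t(i) = ⟨p_t, ℓ_t⟩ - ℓ_t(i)
        (∀ t ∈ Finset.Icc 1 T, ∀ i, r t i = (∑ j, p t j * ℓ t j) - ℓ t i) →
        -- c_t(i) = - z_t(i) r_t(i)
        (∀ t ∈ Finset.Icc 1 T, ∀ i, c t i = -(z t i * r t i)) →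
        -- Condition 1 for 𝒜 on the losses c with constant C and rate η
        (∀ i : Fin K,
          ((∑ t ∈ Finset.Icc 1 T, ∑ j, w t j * c t j) - ∑ t ∈ Finset.Icc 1 T, c t i ≤
              C * Real.log K / η + η * ∑ t ∈ Finset.Icc 1 T, |c t i|) ∨
          ((∑ t ∈ Finset.Icc 1 T, ∑ j, w t j * c t j) - ∑ t ∈ Finset.Icc 1 T, c t i ≤
              C * Real.log K / η +
                η * ∑ t ∈ Finset.Icc 1 T, |(∑ j, w t j * c t j) - c t i|)) →
        -- Condition 2 for each 𝒜ᵢ on the two-action losses h_t = (0, 5η - r_t(i)),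
        -- with distributions q_t = (1 - z_t(i), z_t(i))
        (∀ i : Fin K, ∀ S' : ℕ, 1 ≤ S' → S' ≤ T → ∀ b : ℕ → Bool,
          (∑ t ∈ Finset.Icc 2 T, if b t = b (t - 1) then 0 else 1) ≤ S' - 1 →
          ((∑ t ∈ Finset.Icc 1 T, ((1 - z t i) * 0 + z t i * (5 * η - r t i))) -
              (∑ t ∈ Finset.Icc 1 T, if b t then 5 * η - r t i else 0) ≤
              C * S' * Real.log T / η +
                η * ∑ t ∈ Finset.Icc 1 T, |if b t then 5 * η - r t i else (0 : ℝ)|) ∨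
          ((∑ t ∈ Finset.Icc 1 T, ((1 - z t i) * 0 + z t i * (5 * η - r t i))) -
              (∑ t ∈ Finset.Icc 1 T, if b t then 5 * η - r t i else 0) ≤
              C * S' * Real.log T / η +
                η * ∑ t ∈ Finset.Icc 1 T,
                  |((1 - z t i) * 0 + z t i * (5 * η - r t i)) -
                    (if b t then 5 * η - r t i else 0)|) ∨
          ((∑ t ∈ Finset.Icc 1 T, ((1 - z t i) * 0 + z t i * (5 * η - r t i))) -
              (∑ t ∈ Finset.Icc 1 T, if b t then 5 * η - r t i else 0) ≤
              C * S' * Real.log T / η +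
                η * ∑ t ∈ Finset.Icc 1 T,
                  ((1 - z t i) * |(0 : ℝ)| + z t i * |5 * η - r t i|))) →
        -- benchmark sequence: at most S-1 switches and at most n distinct actions
        ∀ idx : ℕ → Fin K,
          (∑ t ∈ Finset.Icc 2 T, if idx t = idx (t - 1) then 0 else 1) ≤ S - 1 →
          ((Finset.Icc 1 T).image idx).card ≤ n →
          (∑ t ∈ Finset.Icc 1 T, r t (idx t)) ≤
            C' * Real.sqrt ((T : ℝ) *
              ((S : ℝ) * Real.log T + (n : ℝ) * Real.log K)) := by
  refine ⟨3 * C + 10, by positivity, ?_⟩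
  intro K T S n hK hT hS1 hST hn η hη ℓ w z p r c hℓ hw hz hD hp hr hc hC1 hC2 idx hsw hcard
  set X : ℝ := (S : ℝ) * Real.log T + (n : ℝ) * Real.log K with hXdef
  have hT1 : (1:ℝ) < (T:ℝ) := by exact_mod_cast Nat.lt_of_lt_of_le (by norm_num) hT
  have hK1 : (1:ℝ) < (K:ℝ) := by exact_mod_cast Nat.lt_of_lt_of_le (by norm_num) hK
  have hTpos : (0:ℝ) < T := by linarith
  have hlT : 0 < Real.log T := Real.log_pos hT1
  have hlK : 0 < Real.log K := Real.log_pos hK1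
  have hS1' : (1:ℝ) ≤ (S:ℝ) := by exact_mod_cast hS1
  have hn' : (1:ℝ) ≤ (n:ℝ) := by exact_mod_cast hn
  have hXpos : 0 < X := by
    have h1 : 0 < (S:ℝ) * Real.log T := mul_pos (by linarith) hlT
    have h2 : 0 < (n:ℝ) * Real.log K := mul_pos (by linarith) hlK
    rw [hXdef]; linarith
  have hηpos : 0 < η := by
    rw [hη]
    exact lt_min (by norm_num) (Real.sqrt_pos.mpr (div_pos hXpos hTpos))
  have hη5 : η ≤ 1/5 := by rw [hη]; exact min_le_left _ _
  -- basic per-round facts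
  have hpnn : ∀ t ∈ Finset.Icc 1 T, ∀ i, 0 ≤ p t i := by
    intro t ht i
    rw [hp t ht i]
    exact div_nonneg (mul_nonneg (hz t ht i).1 ((hw t ht).1 i)) (hD t ht).le
  have hpsum : ∀ t ∈ Finset.Icc 1 T, ∑ j, p t j = 1 := by
    intro t ht
    have h1 : ∑ j, p t j = ∑ j, z t j * w t j / (∑ j', z t j' * w t j') :=
      Finset.sum_congr rfl fun j _ => hp t ht j
    rw [h1, ← Finset.sum_div, div_self (hD t ht).ne']
  have hAabs : ∀ t ∈ Finset.Icc 1 T, |∑ j, p t j * ℓ t j| ≤ 1 := by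
    intro t ht
    calc |∑ j, p t j * ℓ t j| ≤ ∑ j, |p t j * ℓ t j| := Finset.abs_sum_le_sum_abs _ _
      _ ≤ ∑ j, p t j := by
          refine Finset.sum_le_sum fun j _ => ?_
          rw [abs_mul, abs_of_nonneg (hpnn t ht j)]
          calc p t j * |ℓ t j| ≤ p t j * 1 :=
                mul_le_mul_of_nonneg_left (hℓ t ht j) (hpnn t ht j)
            _ = p t j := mul_one _
      _ = 1 := hpsum t ht
  have hrb : ∀ t ∈ Finset.Icc 1 T, ∀ i, |r t i| ≤ 2 := by
    intro t ht i
    rw [hr t ht i]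
    calc |(∑ j, p t j * ℓ t j) - ℓ t i| ≤ |∑ j, p t j * ℓ t j| + |ℓ t i| := abs_sub _ _
      _ ≤ 1 + 1 := add_le_add (hAabs t ht) (hℓ t ht i)
      _ = 2 := by norm_num
  have hwc0 : ∀ t ∈ Finset.Icc 1 T, ∑ j, w t j * c t j = 0 := by
    intro t ht
    have e2 : ∑ j, (z t j * w t j) * ℓ t j = (∑ k, p t k * ℓ t k) * (∑ j, z t j * w t j) := by
      rw [Finset.sum_mul]
      refine Finset.sum_congr rfl fun k _ => ?_
      rw [hp t ht k]
      field_simp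
      rw [mul_div_cancel_right₀ _ (hD t ht).ne']
    have e3 : ∑ j, w t j * c t j =
        (∑ j, (z t j * w t j) * ℓ t j) - ∑ j, (∑ k, p t k * ℓ t k) * (z t j * w t j) := by
      rw [← Finset.sum_sub_distrib]
      refine Finset.sum_congr rfl fun j _ => ?_
      rw [hc t ht j, hr t ht j]; ring
    rw [e3, ← Finset.mul_sum, e2]; ring
  -- Step A : static regret consequence
  have hA : ∀ i, ∑ t ∈ Finset.Icc 1 T, z t i * r t i ≤
      C * Real.log K / η + 2 * η * ∑ t ∈ Finset.Icc 1 T, z t i := by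
    intro i
    have hzero : ∑ t ∈ Finset.Icc 1 T, ∑ j, w t j * c t j = 0 :=
      Finset.sum_eq_zero fun t ht => hwc0 t ht
    have hcieq : ∑ t ∈ Finset.Icc 1 T, c t i = -∑ t ∈ Finset.Icc 1 T, z t i * r t i := by
      rw [← Finset.sum_neg_distrib]
      exact Finset.sum_congr rfl fun t ht => by rw [hc t ht i]
    have habs : ∑ t ∈ Finset.Icc 1 T, |c t i| ≤ ∑ t ∈ Finset.Icc 1 T, 2 * z t i := by
      refine Finset.sum_le_sum fun t ht => ?_
      rw [hc t ht i, abs_neg, abs_mul, abs_of_nonneg (hz t ht i).1]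
      have h2 := hrb t ht i
      nlinarith [(hz t ht i).1]
    have hstep : (0:ℝ) - ∑ t ∈ Finset.Icc 1 T, c t i ≤
        C * Real.log K / η + η * ∑ t ∈ Finset.Icc 1 T, |c t i| := by
      rcases hC1 i with h | h
      · rw [hzero] at h; exact h
      · rw [hzero] at h
        have e : ∑ t ∈ Finset.Icc 1 T, |(∑ j, w t j * c t j) - c t i| =
            ∑ t ∈ Finset.Icc 1 T, |c t i| := by
          refine Finset.sum_congr rfl fun t ht => ?_
          rw [hwc0 t ht, zero_sub, abs_neg]
        rw [e] at h; exact h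
    rw [hcieq] at hstep
    have h3 := mul_le_mul_of_nonneg_left habs hηpos.le
    have h4 : η * ∑ t ∈ Finset.Icc 1 T, 2 * z t i =
        2 * η * ∑ t ∈ Finset.Icc 1 T, z t i := by
      rw [Finset.mul_sum, Finset.mul_sum]
      exact Finset.sum_congr rfl fun t _ => by ring
    linarith
  have h3abs : ∀ t ∈ Finset.Icc 1 T, ∀ i, |5 * η - r t i| ≤ 3 := by
    intro t ht i
    have h2 := abs_le.mp (hrb t ht i)
    rw [abs_le]
    constructor <;> · nlinarith
  -- Step B per action
  have hB : ∀ i : Fin K,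
      ∑ t ∈ Finset.Icc 1 T, (if idx t = i then r t i else 0) ≤
        C * ((((∑ t ∈ Finset.Icc 2 T,
            if decide (idx t = i) = decide (idx (t-1) = i) then 0 else 1) : ℕ) : ℝ) + 1) *
          Real.log T / η +
        C * Real.log K / η +
        8 * η * ∑ t ∈ Finset.Icc 1 T, (if idx t = i then (1:ℝ) else 0) := by
    intro i
    set sw : ℕ := ∑ t ∈ Finset.Icc 2 T,
        if decide (idx t = i) = decide (idx (t-1) = i) then 0 else 1 with hswdef
    have hswle : sw + 1 ≤ T := by
      have h1 : sw ≤ ∑ t ∈ Finset.Icc 2 T, 1 := by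
        rw [hswdef]
        refine Finset.sum_le_sum fun t _ => ?_
        split <;> omega
      simp only [Finset.sum_const, smul_eq_mul, mul_one, Nat.card_Icc] at h1
      omega
    have hcond := hC2 i (sw + 1) (by omega) hswle (fun t => decide (idx t = i))
      (by show sw ≤ sw + 1 - 1; omega)
    simp only [decide_eq_true_eq, mul_zero, zero_add, abs_zero, zero_mul] at hcond
    set Zi : ℝ := ∑ t ∈ Finset.Icc 1 T, z t i with hZidef
    set Ti : ℝ := ∑ t ∈ Finset.Icc 1 T, (if idx t = i then (1:ℝ) else 0) with hTidef
    have hZinn : 0 ≤ Zi := Finset.sum_nonneg fun t ht => (hz t ht i).1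
    have hTinn : 0 ≤ Ti := Finset.sum_nonneg fun t _ => by positivity
    -- common error bound in all three cases
    have herr : (∑ t ∈ Finset.Icc 1 T, z t i * (5 * η - r t i)) -
        (∑ t ∈ Finset.Icc 1 T, if idx t = i then 5 * η - r t i else 0) ≤
        C * (↑(sw + 1)) * Real.log T / η + η * (3 * (Zi + Ti)) := by
      have hsplit : 3 * (Zi + Ti) =
          ∑ t ∈ Finset.Icc 1 T, (3 * (z t i + (if idx t = i then (1:ℝ) else 0))) := by
        rw [hZidef, hTidef, ← Finset.sum_add_distrib, Finset.mul_sum]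
      have hmono : ∀ E : ℝ,
          E ≤ ∑ t ∈ Finset.Icc 1 T, (3 * (z t i + (if idx t = i then (1:ℝ) else 0))) →
          (∑ t ∈ Finset.Icc 1 T, z t i * (5 * η - r t i)) -
            (∑ t ∈ Finset.Icc 1 T, if idx t = i then 5 * η - r t i else 0) ≤
            C * (↑(sw + 1)) * Real.log T / η + η * E →
          (∑ t ∈ Finset.Icc 1 T, z t i * (5 * η - r t i)) -
            (∑ t ∈ Finset.Icc 1 T, if idx t = i then 5 * η - r t i else 0) ≤
            C * (↑(sw + 1)) * Real.log T / η + η * (3 * (Zi + Ti)) := by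
        intro E hE hI
        rw [hsplit]
        have := mul_le_mul_of_nonneg_left hE hηpos.le
        linarith
      rcases hcond with h | h | h
      · refine hmono _ ?_ h
        refine Finset.sum_le_sum fun t ht => ?_
        have h3 := h3abs t ht i
        have hz1 := (hz t ht i).1
        by_cases hii : idx t = i
        · rw [if_pos hii, if_pos hii]; linarith
        · rw [if_neg hii, if_neg hii, abs_zero]; linarith
      · refine hmono _ ?_ h
        refine Finset.sum_le_sum fun t ht => ?_
        have h3 := h3abs t ht i
        have hz1 := (hz t ht i).1
        have habsz : |z t i * (5 * η - r t i)| = z t i * |5 * η - r t i| := by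
          rw [abs_mul, abs_of_nonneg hz1]
        by_cases hii : idx t = i
        · rw [if_pos hii, if_pos hii]
          calc |z t i * (5 * η - r t i) - (5 * η - r t i)| ≤
                |z t i * (5 * η - r t i)| + |5 * η - r t i| := abs_sub _ _
            _ ≤ 3 * (z t i + 1) := by rw [habsz]; nlinarith
        · rw [if_neg hii, if_neg hii, sub_zero, habsz]; nlinarith
      · refine hmono _ ?_ h
        refine Finset.sum_le_sum fun t ht => ?_
        have h3 := h3abs t ht i
        have hz1 := (hz t ht i).1
        have : z t i * |5 * η - r t i| ≤ 3 * z t i := by nlinarith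
        by_cases hii : idx t = i
        · rw [if_pos hii]; linarith
        · rw [if_neg hii]; linarith
    have e5 : ∑ t ∈ Finset.Icc 1 T, z t i * (5 * η - r t i) =
        5 * η * Zi - ∑ t ∈ Finset.Icc 1 T, z t i * r t i := by
      rw [hZidef, Finset.mul_sum, ← Finset.sum_sub_distrib]
      exact Finset.sum_congr rfl fun t _ => by ring
    have e6 : ∑ t ∈ Finset.Icc 1 T, (if idx t = i then 5 * η - r t i else 0) =
        5 * η * Ti - ∑ t ∈ Finset.Icc 1 T, (if idx t = i then r t i else 0) := by
      rw [hTidef, Finset.mul_sum, ← Finset.sum_sub_distrib]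
      refine Finset.sum_congr rfl fun t _ => ?_
      by_cases hii : idx t = i
      · rw [if_pos hii, if_pos hii, if_pos hii]; ring
      · rw [if_neg hii, if_neg hii, if_neg hii]; ring
    have hAi := hA i
    rw [e5, e6] at herr
    have hcast : ((sw : ℝ) + 1) = ((sw + 1 : ℕ) : ℝ) := by push_cast; ring
    rw [hcast]
    linarith
  -- bounding the number of distinct actions by S
  set I : Finset (Fin K) := (Finset.Icc 1 T).image idx with hIdef
  have hIcard : I.card ≤ S := by
    have haux : ∀ t, t ∈ Finset.Icc 1 T → idx t ∈
        insert (idx 1) (((Finset.Icc 2 T).filter fun t => ¬ idx t = idx (t-1)).image idx) := by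
      intro t
      induction t using Nat.strong_induction_on with
      | _ t ih =>
        intro ht
        rw [Finset.mem_Icc] at ht
        by_cases h1 : t = 1
        · subst h1; exact Finset.mem_insert_self _ _
        · have ht2 : 2 ≤ t := by omega
          by_cases h2 : idx t = idx (t-1)
          · rw [h2]
            exact ih (t-1) (by omega) (Finset.mem_Icc.mpr ⟨by omega, by omega⟩)
          · exact Finset.mem_insert_of_mem (Finset.mem_image_of_mem idx
              (Finset.mem_filter.mpr ⟨Finset.mem_Icc.mpr ⟨ht2, ht.2⟩, h2⟩))
    have hIsub : I ⊆
        insert (idx 1) (((Finset.Icc 2 T).filter fun t => ¬ idx t = idx (t-1)).image idx) := by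
      intro i hi
      rw [hIdef, Finset.mem_image] at hi
      obtain ⟨t, ht, rfl⟩ := hi
      exact haux t ht
    have h1 := Finset.card_le_card hIsub
    have h2 := Finset.card_insert_le (idx 1)
      (((Finset.Icc 2 T).filter fun t => ¬ idx t = idx (t-1)).image idx)
    have h3 := Finset.card_image_le (s := (Finset.Icc 2 T).filter fun t => ¬ idx t = idx (t-1))
      (f := idx)
    have h4 : ((Finset.Icc 2 T).filter fun t => ¬ idx t = idx (t-1)).card ≤ S - 1 := by
      rw [Finset.card_filter]
      calc ∑ t ∈ Finset.Icc 2 T, (if ¬ idx t = idx (t-1) then 1 else 0) =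
            ∑ t ∈ Finset.Icc 2 T, (if idx t = idx (t-1) then 0 else 1) :=
          Finset.sum_congr rfl fun t _ => by
            by_cases h : idx t = idx (t-1) <;> simp [h]
        _ ≤ S - 1 := hsw
    omega
  -- total switch count over I
  have hswsum : ∑ i ∈ I, (∑ t ∈ Finset.Icc 2 T,
      if decide (idx t = i) = decide (idx (t-1) = i) then 0 else 1) ≤ 2 * (S - 1) := by
    rw [Finset.sum_comm]
    calc ∑ t ∈ Finset.Icc 2 T, ∑ i ∈ I,
          (if decide (idx t = i) = decide (idx (t-1) = i) then 0 else 1) ≤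
        ∑ t ∈ Finset.Icc 2 T, 2 * (if idx t = idx (t-1) then 0 else 1) := by
          refine Finset.sum_le_sum fun t _ => ?_
          by_cases h : idx t = idx (t-1)
          · rw [if_pos h]
            have : ∀ i ∈ I, (if decide (idx t = i) = decide (idx (t-1) = i) then 0 else 1) = 0 := by
              intro i _
              rw [h, if_pos rfl]
            rw [Finset.sum_congr rfl this]
            simp
          · rw [if_neg h]
            calc ∑ i ∈ I, (if decide (idx t = i) = decide (idx (t-1) = i) then 0 else 1) ≤
                  ∑ i ∈ I, ((if idx t = i then 1 else 0) + (if idx (t-1) = i then 1 else 0)) := by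
                    refine Finset.sum_le_sum fun i _ => ?_
                    by_cases h1 : idx t = i <;> by_cases h2 : idx (t-1) = i <;>
                      simp [h1, h2]
              _ = (if idx t ∈ I then 1 else 0) + (if idx (t-1) ∈ I then 1 else 0) := by
                    rw [Finset.sum_add_distrib, Finset.sum_ite_eq, Finset.sum_ite_eq]
              _ ≤ 2 * 1 := by split_ifs <;> omega
      _ = 2 * ∑ t ∈ Finset.Icc 2 T, (if idx t = idx (t-1) then 0 else 1) := by
            rw [Finset.mul_sum]
      _ ≤ 2 * (S - 1) := Nat.mul_le_mul_left 2 hsw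
  -- summing the per-action bounds
  have hsum_r : ∑ t ∈ Finset.Icc 1 T, r t (idx t) =
      ∑ i ∈ I, ∑ t ∈ Finset.Icc 1 T, (if idx t = i then r t i else 0) := by
    rw [Finset.sum_comm]
    refine Finset.sum_congr rfl fun t ht => ?_
    rw [Finset.sum_ite_eq, if_pos (by rw [hIdef]; exact Finset.mem_image_of_mem idx ht)]
  have hsum_T : ∑ i ∈ I, ∑ t ∈ Finset.Icc 1 T, (if idx t = i then (1:ℝ) else 0) = (T:ℝ) := by
    rw [Finset.sum_comm]
    have h1 : ∀ t ∈ Finset.Icc 1 T, ∑ i ∈ I, (if idx t = i then (1:ℝ) else 0) = 1 := by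
      intro t ht
      rw [Finset.sum_ite_eq, if_pos (by rw [hIdef]; exact Finset.mem_image_of_mem idx ht)]
    rw [Finset.sum_congr rfl h1]
    simp [Nat.card_Icc]
  have hsum_S : ∑ i ∈ I, ((((∑ t ∈ Finset.Icc 2 T,
      if decide (idx t = i) = decide (idx (t-1) = i) then 0 else 1) : ℕ) : ℝ) + 1) ≤
      3 * (S:ℝ) := by
    have h1 : ∑ i ∈ I, ((∑ t ∈ Finset.Icc 2 T,
        if decide (idx t = i) = decide (idx (t-1) = i) then 0 else 1) + 1) ≤ 3 * S := by
      rw [Finset.sum_add_distrib, Finset.sum_const, smul_eq_mul, mul_one]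
      omega
    calc ∑ i ∈ I, ((((∑ t ∈ Finset.Icc 2 T,
          if decide (idx t = i) = decide (idx (t-1) = i) then 0 else 1) : ℕ) : ℝ) + 1) =
        (((∑ i ∈ I, ((∑ t ∈ Finset.Icc 2 T,
          if decide (idx t = i) = decide (idx (t-1) = i) then 0 else 1) + 1)) : ℕ) : ℝ) := by
          push_cast; ring
      _ ≤ ((3 * S : ℕ) : ℝ) := by exact_mod_cast h1
      _ = 3 * (S:ℝ) := by push_cast; ring
  have hmain : ∑ t ∈ Finset.Icc 1 T, r t (idx t) ≤
      C * Real.log T / η * (3 * (S:ℝ)) + (n:ℝ) * (C * Real.log K / η) + 8 * η * (T:ℝ) := by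
    rw [hsum_r]
    have hstep1 : ∑ i ∈ I, ∑ t ∈ Finset.Icc 1 T, (if idx t = i then r t i else 0) ≤
        ∑ i ∈ I, (C * ((((∑ t ∈ Finset.Icc 2 T,
            if decide (idx t = i) = decide (idx (t-1) = i) then 0 else 1) : ℕ) : ℝ) + 1) *
          Real.log T / η +
        C * Real.log K / η +
        8 * η * ∑ t ∈ Finset.Icc 1 T, (if idx t = i then (1:ℝ) else 0)) :=
      Finset.sum_le_sum fun i _ => hB i
    have hstep2 : ∑ i ∈ I, (C * ((((∑ t ∈ Finset.Icc 2 T,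
            if decide (idx t = i) = decide (idx (t-1) = i) then 0 else 1) : ℕ) : ℝ) + 1) *
          Real.log T / η +
        C * Real.log K / η +
        8 * η * ∑ t ∈ Finset.Icc 1 T, (if idx t = i then (1:ℝ) else 0)) =
        C * Real.log T / η * (∑ i ∈ I, ((((∑ t ∈ Finset.Icc 2 T,
            if decide (idx t = i) = decide (idx (t-1) = i) then 0 else 1) : ℕ) : ℝ) + 1)) +
        (I.card : ℝ) * (C * Real.log K / η) +
        8 * η * (∑ i ∈ I, ∑ t ∈ Finset.Icc 1 T, (if idx t = i then (1:ℝ) else 0)) := by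
      rw [Finset.sum_add_distrib, Finset.sum_add_distrib, Finset.sum_const,
        nsmul_eq_mul, Finset.mul_sum, Finset.mul_sum]
      congr 2
      · exact Finset.sum_congr rfl fun i _ => by ring
    have hcn : (I.card : ℝ) ≤ (n : ℝ) := by exact_mod_cast hcard
    have hpos1 : 0 ≤ C * Real.log T / η := by positivity
    have hpos2 : 0 ≤ C * Real.log K / η := by positivity
    have h5 := mul_le_mul_of_nonneg_left hsum_S hpos1
    have h6 := mul_le_mul_of_nonneg_right hcn hpos2
    rw [hsum_T] at hstep2
    linarith
  -- final case analysis
  rcases le_total (Real.sqrt (X / (T:ℝ))) (1/5 : ℝ) with hcase | hcase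
  · -- small regime: η = √(X/T)
    have hηeq : η = Real.sqrt (X / (T:ℝ)) := by rw [hη, min_eq_right hcase]
    have hη2 : η ^ 2 = X / (T:ℝ) := by
      rw [hηeq]; exact Real.sq_sqrt (div_nonneg hXpos.le hTpos.le)
    have hXeq : X = η ^ 2 * (T:ℝ) := (div_eq_iff hTpos.ne').mp hη2.symm
    have hsqrt : Real.sqrt ((T:ℝ) * X) = η * (T:ℝ) := by
      have h1 : (T:ℝ) * X = (η * (T:ℝ)) ^ 2 := by rw [hXeq]; ring
      rw [h1, Real.sqrt_sq (by positivity)]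
    rw [hsqrt]
    have hkey : C * Real.log T / η * (3 * (S:ℝ)) + (n:ℝ) * (C * Real.log K / η) +
        8 * η * (T:ℝ) ≤ (3 * C + 10) * (η * (T:ℝ)) := by
      have e1 : C * Real.log T / η * (3 * (S:ℝ)) + (n:ℝ) * (C * Real.log K / η) +
          8 * η * (T:ℝ) =
          (C * Real.log T * (3 * (S:ℝ)) + (n:ℝ) * (C * Real.log K) + 8 * (η ^ 2 * (T:ℝ))) / η := by
        field_simp
      have e2 : (3 * C + 10) * (η * (T:ℝ)) = ((3 * C + 10) * (η ^ 2 * (T:ℝ))) / η := by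
        field_simp
      rw [e1, e2, div_le_div_iff_of_pos_right hηpos, ← hXeq, hXdef]
      nlinarith [mul_nonneg (by linarith : (0:ℝ) ≤ (S:ℝ)) hlT.le,
        mul_nonneg (by linarith : (0:ℝ) ≤ (n:ℝ)) hlK.le, hC.le]
    linarith
  · -- large regime: use the trivial bound
    have htriv : ∑ t ∈ Finset.Icc 1 T, r t (idx t) ≤ 2 * (T:ℝ) := by
      calc ∑ t ∈ Finset.Icc 1 T, r t (idx t) ≤ ∑ t ∈ Finset.Icc 1 T, (2:ℝ) :=
            Finset.sum_le_sum fun t ht => (abs_le.mp (hrb t ht (idx t))).2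
        _ = 2 * (T:ℝ) := by simp [Nat.card_Icc]; ring
    have hsT : 0 < Real.sqrt (T:ℝ) := Real.sqrt_pos.mpr hTpos
    have h1 : Real.sqrt (X / (T:ℝ)) = Real.sqrt X / Real.sqrt (T:ℝ) := Real.sqrt_div hXpos.le _
    have h2 : Real.sqrt ((T:ℝ) * X) = Real.sqrt (T:ℝ) * Real.sqrt X :=
      Real.sqrt_mul hTpos.le _
    have h3 : Real.sqrt (T:ℝ) / 5 ≤ Real.sqrt X := by
      rw [h1, le_div_iff₀ hsT] at hcase
      linarith
    have h4 : Real.sqrt (T:ℝ) * Real.sqrt (T:ℝ) = (T:ℝ) := Real.mul_self_sqrt hTpos.le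
    have h5 : (T:ℝ) / 5 ≤ Real.sqrt ((T:ℝ) * X) := by
      rw [h2]
      nlinarith
    have h6 : 0 ≤ Real.sqrt ((T:ℝ) * X) := Real.sqrt_nonneg _
    nlinarith
end

section
/- Fix integers K, T ≥ 2, S ∈ [T] and any η ∈ (0,1/5]. Let ℓ_1,…,ℓ_T ∈ [−1,1]^K, let w_1,…,w_T ∈ Δ_K and z_t(i) ∈ [0,1] with Σ_j z_t(j)w_t(j) > 0, and define p_t(i) = z_t(i)w_t(i)/Σ_j z_t(j)w_t(j), r_t(i) = ⟨p_t, ℓ_t⟩ − ℓ_t(i), c_t(i) = −z_t(i)r_t(i). Assume (w_t) satisfies Condition 1 with constant C for the losses (c_t), and for every i ∈ [K] the sequence q_t = (1 − z_t(i), z_t(i)) satisfies Condition 2 with constant C and parameter η for the losses h_t = (0, 5η − r_t(i)). Then for any benchmark sequence i_1,…,i_T ∈ [K] with at most S−1 switches and any action i appearing in it, Σ_{t : i_t = i} r_t(i) ≤ C(S_i ln T + ln K)/η + 8η T_i, where S_i = 1 + Σ_{t=2}^T 1{(i_{t−1}=i and i_t≠i) or (i_{t−1}≠i and i_t=i)}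 and T_i = |{t : i_t = i}|. -/
/-- per-action bound Eq. (16) in the proof of Theorem 1.
Under Conditions 1 and 2 with constant `C` and any `η ∈ (0, 1/5]`, for any benchmark
sequence with at most `S-1` switches and any action `i` appearing in it,
`Σ_{t : i_t = i} r_t(i) ≤ C (S_i ln T + ln K)/η + 8 η T_i`. -/
theorem stmt_1 (C : ℝ) (hC : 0 < C)
    (K T S : ℕ) (hK : 2 ≤ K) (hT : 2 ≤ T) (hS1 : 1 ≤ S) (hST : S ≤ T)
    (η : ℝ) (hη0 : 0 < η) (hη : η ≤ 1 / 5)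
    (ℓ w z p r c : ℕ → Fin K → ℝ)
    -- losses in [-1,1]
    (hℓ : ∀ t ∈ Finset.Icc 1 T, ∀ i, |ℓ t i| ≤ 1)
    -- w_t ∈ Δ_K
    (hw : ∀ t ∈ Finset.Icc 1 T, (∀ i, 0 ≤ w t i) ∧ (∑ i, w t i) = 1)
    -- confidences z_t(i) ∈ [0,1]
    (hz : ∀ t ∈ Finset.Icc 1 T, ∀ i, 0 ≤ z t i ∧ z t i ≤ 1)
    (hzpos : ∀ t ∈ Finset.Icc 1 T, 0 < ∑ j, z t j * w t j)
    (hp : ∀ t ∈ Finset.Icc 1 T, ∀ i, p t i = z t i * w t i / ∑ j, z t j * w t j)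
    (hr : ∀ t ∈ Finset.Icc 1 T, ∀ i, r t i = (∑ j, p t j * ℓ t j) - ℓ t i)
    (hc : ∀ t ∈ Finset.Icc 1 T, ∀ i, c t i = -(z t i * r t i))
    -- Condition 1 for 𝒜 on the losses c with constant C and rate η
    (hCond1 : ∀ i : Fin K,
      ((∑ t ∈ Finset.Icc 1 T, ∑ j, w t j * c t j) - ∑ t ∈ Finset.Icc 1 T, c t i ≤
          C * Real.log K / η + η * ∑ t ∈ Finset.Icc 1 T, |c t i|) ∨
      ((∑ t ∈ Finset.Icc 1 T, ∑ j, w t j * c t j) - ∑ t ∈ Finset.Icc 1 T, c t i ≤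
          C * Real.log K / η +
            η * ∑ t ∈ Finset.Icc 1 T, |(∑ j, w t j * c t j) - c t i|))
    -- Condition 2 for each 𝒜ᵢ on the two-action losses h_t = (0, 5η - r_t(i)),
    -- with distributions q_t = (1 - z_t(i), z_t(i))
    (hCond2 : ∀ i : Fin K, ∀ S' : ℕ, 1 ≤ S' → S' ≤ T → ∀ b : ℕ → Bool,
      (∑ t ∈ Finset.Icc 2 T, if b t = b (t - 1) then 0 else 1) ≤ S' - 1 →
      ((∑ t ∈ Finset.Icc 1 T, ((1 - z t i) * 0 + z t i * (5 * η - r t i))) -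
          (∑ t ∈ Finset.Icc 1 T, if b t then 5 * η - r t i else 0) ≤
          C * S' * Real.log T / η +
            η * ∑ t ∈ Finset.Icc 1 T, |if b t then 5 * η - r t i else (0 : ℝ)|) ∨
      ((∑ t ∈ Finset.Icc 1 T, ((1 - z t i) * 0 + z t i * (5 * η - r t i))) -
          (∑ t ∈ Finset.Icc 1 T, if b t then 5 * η - r t i else 0) ≤
          C * S' * Real.log T / η +
            η * ∑ t ∈ Finset.Icc 1 T,
              |((1 - z t i) * 0 + z t i * (5 * η - r t i)) -
                (if b t then 5 * η - r t i else 0)|) ∨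
      ((∑ t ∈ Finset.Icc 1 T, ((1 - z t i) * 0 + z t i * (5 * η - r t i))) -
          (∑ t ∈ Finset.Icc 1 T, if b t then 5 * η - r t i else 0) ≤
          C * S' * Real.log T / η +
            η * ∑ t ∈ Finset.Icc 1 T,
              ((1 - z t i) * |(0 : ℝ)| + z t i * |5 * η - r t i|)))
    -- benchmark sequence with at most S-1 switches
    (idx : ℕ → Fin K)
    (hswitch : (∑ t ∈ Finset.Icc 2 T, if idx t = idx (t - 1) then 0 else 1) ≤ S - 1)
    -- an action appearing in the benchmark
    (i : Fin K) (happear : ∃ t ∈ Finset.Icc 1 T, idx t = i) :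
    (∑ t ∈ (Finset.Icc 1 T).filter (fun t => idx t = i), r t i) ≤
      C * ((1 + (∑ t ∈ Finset.Icc 2 T,
              if (idx (t - 1) = i ∧ idx t ≠ i) ∨ (idx (t - 1) ≠ i ∧ idx t = i)
              then 1 else 0 : ℕ) : ℝ) * Real.log T + Real.log K) / η +
        8 * η * (((Finset.Icc 1 T).filter (fun t => idx t = i)).card : ℝ) := by
  classical
  -- notation
  set I := Finset.Icc 1 T with hIdef
  set F := I.filter (fun t => idx t = i) with hFdef
  set N : ℕ := ∑ t ∈ Finset.Icc 2 T,
      if (idx (t - 1) = i ∧ idx t ≠ i) ∨ (idx (t - 1) ≠ i ∧ idx t = i) then 1 else 0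
    with hNdef
  -- per-round bound |r t j| ≤ 2
  have hrbound : ∀ t ∈ I, ∀ j, |r t j| ≤ 2 := by
    intro t ht j
    have hZ : 0 < ∑ j, z t j * w t j := hzpos t ht
    have hpnn : ∀ k, 0 ≤ p t k := by
      intro k
      rw [hp t ht k]
      exact div_nonneg (mul_nonneg (hz t ht k).1 ((hw t ht).1 k)) hZ.le
    have hpsum : (∑ k, p t k) = 1 := by
      have h1 : (∑ k, p t k) = (∑ k, z t k * w t k) / (∑ j, z t j * w t j) := by
        rw [Finset.sum_div]
        exact Finset.sum_congr rfl fun k _ => hp t ht k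
      rw [h1, div_self hZ.ne']
    have hA : |∑ k, p t k * ℓ t k| ≤ 1 := by
      calc |∑ k, p t k * ℓ t k| ≤ ∑ k, |p t k * ℓ t k| := Finset.abs_sum_le_sum_abs _ _
        _ ≤ ∑ k, p t k := by
            refine Finset.sum_le_sum fun k _ => ?_
            rw [abs_mul, abs_of_nonneg (hpnn k)]
            calc p t k * |ℓ t k| ≤ p t k * 1 :=
                  mul_le_mul_of_nonneg_left (hℓ t ht k) (hpnn k)
              _ = p t k := mul_one _
        _ = 1 := hpsum
    rw [hr t ht j]
    calc |(∑ k, p t k * ℓ t k) - ℓ t j| ≤ |∑ k, p t k * ℓ t k| + |ℓ t j| :=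
          abs_sub _ _
      _ ≤ 1 + 1 := add_le_add hA (hℓ t ht j)
      _ = 2 := by norm_num
  -- the learner's loss in condition 1 is zero each round
  have hwc0 : ∀ t ∈ I, (∑ j, w t j * c t j) = 0 := by
    intro t ht
    have hZ : 0 < ∑ j, z t j * w t j := hzpos t ht
    have hAval : (∑ k, p t k * ℓ t k)
        = (∑ k, z t k * w t k * ℓ t k) / (∑ j, z t j * w t j) := by
      rw [Finset.sum_div]
      refine Finset.sum_congr rfl fun k _ => ?_
      rw [hp t ht k]; ring
    have h1 : (∑ j, w t j * c t j)
        = (∑ j, z t j * w t j * ℓ t j)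
            - (∑ k, p t k * ℓ t k) * (∑ j, z t j * w t j) := by
      rw [Finset.mul_sum, ← Finset.sum_sub_distrib]
      refine Finset.sum_congr rfl fun j _ => ?_
      rw [hc t ht j, hr t ht j]; ring
    rw [h1, hAval, div_mul_cancel₀ _ hZ.ne', sub_self]
  -- consequence of Condition 1
  have habs : ∀ t ∈ I, |c t i| = z t i * |r t i| := by
    intro t ht
    rw [hc t ht i, abs_neg, abs_mul, abs_of_nonneg (hz t ht i).1]
  have hcsum : (∑ t ∈ I, c t i) = -∑ t ∈ I, z t i * r t i := by
    rw [← Finset.sum_neg_distrib]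
    exact Finset.sum_congr rfl fun t ht => by rw [hc t ht i]
  have hLzero : (∑ t ∈ I, ∑ j, w t j * c t j) = 0 := Finset.sum_eq_zero hwc0
  have H1 : (∑ t ∈ I, z t i * r t i)
      ≤ C * Real.log K / η + η * ∑ t ∈ I, z t i * |r t i| := by
    rcases hCond1 i with h | h
    · rw [hLzero, hcsum, zero_sub, neg_neg,
        Finset.sum_congr rfl habs] at h
      exact h
    · rw [hLzero, hcsum, zero_sub, neg_neg] at h
      have : (∑ t ∈ I, |(∑ j, w t j * c t j) - c t i|)
          = ∑ t ∈ I, z t i * |r t i| := by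
        refine Finset.sum_congr rfl fun t ht => ?_
        rw [hwc0 t ht, zero_sub, abs_neg, habs t ht]
      rw [this] at h
      exact h
  -- bundle quantities
  set Zs := ∑ t ∈ I, z t i with hZsdef
  set ZR := ∑ t ∈ I, z t i * r t i with hZRdef
  set ZA := ∑ t ∈ I, z t i * |r t i| with hZAdef
  have hZsnn : 0 ≤ Zs := Finset.sum_nonneg fun t ht => (hz t ht i).1
  have hZA2 : ZA ≤ 2 * Zs := by
    rw [hZAdef, hZsdef, Finset.mul_sum]
    refine Finset.sum_le_sum fun t ht => ?_
    calc z t i * |r t i| ≤ z t i * 2 :=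
          mul_le_mul_of_nonneg_left (hrbound t ht i) (hz t ht i).1
      _ = 2 * z t i := mul_comm _ _
  have hTinn : (0:ℝ) ≤ (F.card : ℝ) := Nat.cast_nonneg _
  -- the benchmark bits
  set b : ℕ → Bool := fun t => decide (idx t = i) with hbdef
  have hbswitch : (∑ t ∈ Finset.Icc 2 T, if b t = b (t - 1) then 0 else 1) = N := by
    refine Finset.sum_congr rfl fun t _ => ?_
    by_cases h1 : idx t = i <;> by_cases h2 : idx (t - 1) = i <;>
      simp [hbdef, h1, h2]
  have hNle : N ≤ T - 1 := by
    have : N ≤ ∑ t ∈ Finset.Icc 2 T, 1 := by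
      refine Finset.sum_le_sum fun t _ => ?_
      split <;> omega
    simpa [Nat.card_Icc] using this
  have hS'1 : 1 ≤ N + 1 := Nat.le_add_left 1 N
  have hS'T : N + 1 ≤ T := by omega
  have hbcond : (∑ t ∈ Finset.Icc 2 T, if b t = b (t - 1) then 0 else 1)
      ≤ (N + 1) - 1 := by
    rw [hbswitch]; omega
  -- identities for the sums appearing in Condition 2
  have hq1 : (∑ t ∈ I, ((1 - z t i) * 0 + z t i * (5 * η - r t i)))
      = 5 * η * Zs - ZR := by
    rw [hZsdef, hZRdef, Finset.mul_sum, ← Finset.sum_sub_distrib]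
    refine Finset.sum_congr rfl fun t _ => ?_; ring
  have hq2 : (∑ t ∈ I, if b t then 5 * η - r t i else 0)
      = 5 * η * (F.card : ℝ) - ∑ t ∈ F, r t i := by
    have h1 : (∑ t ∈ I, if b t then 5 * η - r t i else 0)
        = ∑ t ∈ F, (5 * η - r t i) := by
      rw [hFdef, Finset.sum_filter]
      refine Finset.sum_congr rfl fun t _ => ?_
      by_cases h : idx t = i <;> simp [hbdef, h]
    rw [h1, Finset.sum_sub_distrib, Finset.sum_const, nsmul_eq_mul]
    ring
  have h5r : ∀ t ∈ I, |5 * η - r t i| ≤ 3 := by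
    intro t ht
    have h1 : |r t i| ≤ 2 := hrbound t ht i
    have h2 : |5 * η| ≤ 1 := by
      rw [abs_of_nonneg (by linarith)]
      linarith
    calc |5 * η - r t i| ≤ |5 * η| + |r t i| := abs_sub _ _
      _ ≤ 3 := by linarith
  -- apply Condition 2
  have hmain : (∑ t ∈ F, r t i)
      ≤ C * ((N : ℝ) + 1) * Real.log T / η + C * Real.log K / η
        + 8 * η * (F.card : ℝ) := by
    have hcast : ((N + 1 : ℕ) : ℝ) = (N : ℝ) + 1 := by push_cast; ring
    rcases hCond2 i (N + 1) hS'1 hS'T b hbcond with h | h | h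
    · -- bound the abs-loss term
      have hX : (∑ t ∈ I, |if b t then 5 * η - r t i else (0:ℝ)|)
          ≤ 3 * (F.card : ℝ) := by
        have h1 : (∑ t ∈ I, |if b t then 5 * η - r t i else (0:ℝ)|)
            = ∑ t ∈ F, |5 * η - r t i| := by
          rw [hFdef, Finset.sum_filter]
          refine Finset.sum_congr rfl fun t _ => ?_
          by_cases hh : idx t = i <;> simp [hbdef, hh]
        rw [h1]
        calc (∑ t ∈ F, |5 * η - r t i|) ≤ ∑ t ∈ F, 3 := by
              refine Finset.sum_le_sum fun t ht => h5r t (Finset.mem_of_mem_filter t ht)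
          _ = 3 * (F.card : ℝ) := by rw [Finset.sum_const, nsmul_eq_mul]; ring
      rw [hq1, hq2, hcast] at h
      have hXη : η * (∑ t ∈ I, |if b t then 5 * η - r t i else (0:ℝ)|)
          ≤ η * (3 * (F.card : ℝ)) := mul_le_mul_of_nonneg_left hX hη0.le
      have hZAη : η * ZA ≤ η * (2 * Zs) := mul_le_mul_of_nonneg_left hZA2 hη0.le
      have hZsη : 0 ≤ η * Zs := mul_nonneg hη0.le hZsnn
      linarith [H1, h, hXη, hZAη, hZsη]
    · have hX : (∑ t ∈ I, |((1 - z t i) * 0 + z t i * (5 * η - r t i)) -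
            (if b t then 5 * η - r t i else 0)|)
          ≤ 3 * Zs + 3 * (F.card : ℝ) := by
        have h1 : (∑ t ∈ I, |((1 - z t i) * 0 + z t i * (5 * η - r t i)) -
              (if b t then 5 * η - r t i else 0)|)
            ≤ ∑ t ∈ I, (3 * z t i + 3 * (if idx t = i then (1:ℝ) else 0)) := by
          refine Finset.sum_le_sum fun t ht => ?_
          have h3 := h5r t ht
          have hz1 := hz t ht i
          by_cases hh : idx t = i
          · have hif : (if b t then 5 * η - r t i else 0) = 5 * η - r t i := by
              simp [hbdef, hh]
            rw [hif, if_pos hh]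
            have heq : (1 - z t i) * 0 + z t i * (5 * η - r t i) - (5 * η - r t i)
                = -((1 - z t i) * (5 * η - r t i)) := by ring
            rw [heq, abs_neg, abs_mul, abs_of_nonneg (by linarith [hz1.2])]
            have := mul_le_mul_of_nonneg_left h3 (by linarith [hz1.2] : (0:ℝ) ≤ 1 - z t i)
            linarith [hz1.1]
          · have hif : (if b t then 5 * η - r t i else 0) = 0 := by
              simp [hbdef, hh]
            rw [hif, if_neg hh]
            have heq : (1 - z t i) * 0 + z t i * (5 * η - r t i) - 0
                = z t i * (5 * η - r t i) := by ring
            rw [heq, abs_mul, abs_of_nonneg hz1.1]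
            have := mul_le_mul_of_nonneg_left h3 hz1.1
            linarith
        calc _ ≤ ∑ t ∈ I, (3 * z t i + 3 * (if idx t = i then (1:ℝ) else 0)) := h1
          _ = 3 * Zs + 3 * (F.card : ℝ) := by
              rw [Finset.sum_add_distrib, hZsdef, ← Finset.mul_sum, ← Finset.mul_sum]
              congr 1
              rw [hFdef, ← Finset.sum_filter, Finset.sum_const, nsmul_eq_mul, mul_one]
      rw [hq1, hq2, hcast] at h
      have hXη : η * (∑ t ∈ I, |((1 - z t i) * 0 + z t i * (5 * η - r t i)) -
            (if b t then 5 * η - r t i else 0)|)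
          ≤ η * (3 * Zs + 3 * (F.card : ℝ)) := mul_le_mul_of_nonneg_left hX hη0.le
      have hZAη : η * ZA ≤ η * (2 * Zs) := mul_le_mul_of_nonneg_left hZA2 hη0.le
      have hZsη : 0 ≤ η * Zs := mul_nonneg hη0.le hZsnn
      linarith [H1, h, hXη, hZAη, hZsη]
    · have hX : (∑ t ∈ I, ((1 - z t i) * |(0:ℝ)| + z t i * |5 * η - r t i|))
          ≤ 3 * Zs := by
        rw [hZsdef, Finset.mul_sum]
        refine Finset.sum_le_sum fun t ht => ?_
        have h3 := h5r t ht
        have hz1 := (hz t ht i).1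
        simp only [abs_zero, mul_zero, zero_add]
        have := mul_le_mul_of_nonneg_left h3 hz1
        linarith
      rw [hq1, hq2, hcast] at h
      have hXη : η * (∑ t ∈ I, ((1 - z t i) * |(0:ℝ)| + z t i * |5 * η - r t i|))
          ≤ η * (3 * Zs) := mul_le_mul_of_nonneg_left hX hη0.le
      have hZAη : η * ZA ≤ η * (2 * Zs) := mul_le_mul_of_nonneg_left hZA2 hη0.le
      have hZsη : 0 ≤ η * Zs := mul_nonneg hη0.le hZsnn
      have hTiη : 0 ≤ η * (F.card : ℝ) := mul_nonneg hη0.le hTinn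
      simp only [abs_zero, mul_zero, zero_add] at h hXη
      linarith [H1, h, hXη, hZAη, hZsη]
  have hring : C * ((N : ℝ) + 1) * Real.log T / η + C * Real.log K / η
      = C * ((1 + (N : ℝ)) * Real.log T + Real.log K) / η := by ring
  calc (∑ t ∈ F, r t i)
      ≤ C * ((N : ℝ) + 1) * Real.log T / η + C * Real.log K / η
        + 8 * η * (F.card : ℝ) := hmain
    _ = C * ((1 + (N : ℝ)) * Real.log T + Real.log K) / η
        + 8 * η * (F.card : ℝ) := by rw [hring]
end

section
/- Let K ≥ 2, η ∈ (0,1/5], and c_1,…,c_T ∈ [−2,2]^K. Define the Hedge-variant weights w_t(i) = exp(−Σ_{τ<t}(η c_τ(i) + η² c_τ(i)²)) / Σ_{j=1}^K exp(−Σ_{τ<t}(η c_τ(j) + η² c_τ(j)²)). Then for every i ∈ [K], Σ_{t=1}^T ⟨w_t, c_t⟩ − Σ_{t=1}^T c_t(i) ≤ (ln K)/η + η Σ_{t=1}^T c_t(i)². -/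
set_option maxHeartbeats 1000000


lemma aux_poly (x : ℝ) (h1 : -(1/2) ≤ x) (h2 : x ≤ 2/5) :
    0 ≤ 96 - 144*x - 63*x^2 - 93*x^3 - 30*x^4 - 18*x^5 - 3*x^6 - x^7 := by
  nlinarith [sq_nonneg x, sq_nonneg (x^2), sq_nonneg (x^3), sq_nonneg (x*(x+1/2)), sq_nonneg (x^2*(x+1/2)), sq_nonneg (x^3*(x+1/2)), mul_nonneg (mul_nonneg (sq_nonneg x) (sq_nonneg x)) (sq_nonneg x), sq_nonneg ((x+1/2)*(x-2/5))]

lemma aux_exp (x : ℝ) (h1 : -(1/2) ≤ x) (h2 : x ≤ 2/5) : Real.exp (-(x + x^2)) ≤ 1 - x := by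
  have hq : (0:ℝ) < 1 + (x + x^2)/4 := by nlinarith
  have h4 : 1 + (x + x^2)/4 ≤ Real.exp ((x + x^2)/4) := by
    linarith [Real.add_one_le_exp ((x + x^2)/4)]
  have h5 : (1 + (x + x^2)/4)^4 ≤ Real.exp (x + x^2) := by
    calc (1 + (x + x^2)/4)^4 ≤ (Real.exp ((x+x^2)/4))^4 := by
          apply pow_le_pow_left₀ (le_of_lt hq) h4
      _ = Real.exp (x + x^2) := by
          rw [← Real.exp_nat_mul]; congr 1; push_cast; ring
  have hg := aux_poly x h1 h2
  have key : 1 ≤ (1 - x) * (1 + (x + x^2)/4)^4 := by nlinarith [sq_nonneg x]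
  have h6 : 1 ≤ (1 - x) * Real.exp (x + x^2) := by
    have hx1 : (0:ℝ) < 1 - x := by linarith
    nlinarith [pow_nonneg (le_of_lt hq) 4]
  rw [Real.exp_neg, inv_le_iff_one_le_mul₀ (Real.exp_pos _)]
  linarith


/-- Hedge Variant 1, Algorithm 4 / Proposition in Appendix A.1.
The Hedge variant with weights `w_t(i) ∝ exp(-Σ_{τ<t}(η c_τ(i) + η² c_τ(i)²))`
satisfies, for every action `i`,
`Σ_t ⟨w_t, c_t⟩ - Σ_t c_t(i) ≤ ln K / η + η Σ_t c_t(i)²`. -/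
theorem stmt_2 (K T : ℕ) (hK : 2 ≤ K)
    (η : ℝ) (hη0 : 0 < η) (hη : η ≤ 1 / 5)
    (c : ℕ → Fin K → ℝ)
    (hc : ∀ t ∈ Finset.Icc 1 T, ∀ i, |c t i| ≤ 2)
    (w : ℕ → Fin K → ℝ)
    (hw : ∀ t ∈ Finset.Icc 1 T, ∀ i,
      w t i =
        Real.exp (-(∑ τ ∈ Finset.Icc 1 (t - 1), (η * c τ i + η ^ 2 * (c τ i) ^ 2))) /
          ∑ j, Real.exp
            (-(∑ τ ∈ Finset.Icc 1 (t - 1), (η * c τ j + η ^ 2 * (c τ j) ^ 2)))) :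
    ∀ i : Fin K,
      (∑ t ∈ Finset.Icc 1 T, ∑ j, w t j * c t j) - (∑ t ∈ Finset.Icc 1 T, c t i) ≤
        Real.log K / η + η * ∑ t ∈ Finset.Icc 1 T, (c t i) ^ 2 := by
  have hKpos : (0:ℕ) < K := by omega
  haveI : NeZero K := ⟨by omega⟩
  set L : ℕ → Fin K → ℝ :=
    fun t i => ∑ τ ∈ Finset.Icc 1 t, (η * c τ i + η ^ 2 * (c τ i) ^ 2) with hL
  set Z : ℕ → ℝ := fun t => ∑ j, Real.exp (-(L t j)) with hZ
  have hZpos : ∀ t, 0 < Z t := by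
    intro t
    apply Finset.sum_pos (fun j _ => Real.exp_pos _)
    exact Finset.univ_nonempty
  -- rewrite hw
  have hw' : ∀ t ∈ Finset.Icc 1 T, ∀ i,
      w t i = Real.exp (-(L (t-1) i)) / Z (t-1) := by
    intro t ht i; exact hw t ht i
  -- key per-step bound
  have key : ∀ t ∈ Finset.Icc 1 T,
      Real.log (Z t) ≤ Real.log (Z (t-1)) - η * ∑ j, w t j * c t j := by
    intro t ht
    obtain ⟨ht1, htT⟩ := Finset.mem_Icc.mp ht
    have ht' : t - 1 + 1 = t := Nat.succ_pred_eq_of_pos ht1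
    set S : ℝ := ∑ j, w t j * c t j with hS
    set Zp : ℝ := Z (t-1) with hZp
    have hZppos := hZpos (t-1)
    -- sum of weights and inner product
    have hwsum : ∑ j, w t j = 1 := by
      rw [Finset.sum_congr rfl (fun j _ => hw' t ht j)]
      rw [← Finset.sum_div]
      exact div_self (ne_of_gt hZppos)
    have hSrepr : ∑ j, Real.exp (-(L (t-1) j)) * c t j = Zp * S := by
      rw [hS, Finset.mul_sum]
      apply Finset.sum_congr rfl
      intro j _
      rw [hw' t ht j]
      field_simp
      rfl
    have hSle : S ≤ 2 := by
      rw [hS]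
      calc ∑ j, w t j * c t j ≤ ∑ j, w t j * 2 := by
            apply Finset.sum_le_sum
            intro j _
            have hwnn : 0 ≤ w t j := by
              rw [hw' t ht j]
              positivity
            exact mul_le_mul_of_nonneg_left (le_trans (le_abs_self _) (hc t ht j)) hwnn
        _ = 2 := by rw [← Finset.sum_mul, hwsum]; ring
    have hpos2 : 0 < 1 - η * S := by nlinarith
    -- L recursion
    have hLrec : ∀ j, L t j = L (t-1) j + (η * c t j + η ^ 2 * (c t j) ^ 2) := by
      intro j
      rw [hL]
      simp only
      rw [← ht', Finset.sum_Icc_succ_top (by omega : 1 ≤ t - 1 + 1), ht']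
    -- Z step bound
    have hZstep : Z t ≤ Zp * (1 - η * S) := by
      have : Z t ≤ ∑ j, Real.exp (-(L (t-1) j)) * (1 - η * c t j) := by
        rw [hZ]; simp only
        apply Finset.sum_le_sum
        intro j _
        rw [hLrec j, neg_add, Real.exp_add]
        apply mul_le_mul_of_nonneg_left _ (le_of_lt (Real.exp_pos _))
        have habs := hc t ht j
        have h1 : -(1/2) ≤ η * c t j := by nlinarith [abs_le.mp habs]
        have h2 : η * c t j ≤ 2/5 := by nlinarith [abs_le.mp habs]
        have := aux_exp (η * c t j) h1 h2
        calc Real.exp (-(η * c t j + η ^ 2 * c t j ^ 2))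
            = Real.exp (-(η * c t j + (η * c t j) ^ 2)) := by ring_nf
          _ ≤ 1 - η * c t j := this
      calc Z t ≤ ∑ j, Real.exp (-(L (t-1) j)) * (1 - η * c t j) := this
        _ = Zp - η * ∑ j, Real.exp (-(L (t-1) j)) * c t j := by
            rw [hZp, hZ, Finset.mul_sum, ← Finset.sum_sub_distrib]
            apply Finset.sum_congr rfl
            intro j _; ring
        _ = Zp * (1 - η * S) := by rw [hSrepr]; ring
    calc Real.log (Z t) ≤ Real.log (Zp * (1 - η * S)) :=
          Real.log_le_log (hZpos t) hZstep
      _ = Real.log Zp + Real.log (1 - η * S) := Real.log_mul (ne_of_gt hZppos) (ne_of_gt hpos2)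
      _ ≤ Real.log Zp + (1 - η * S - 1) := by
          linarith [Real.log_le_sub_one_of_pos hpos2]
      _ = Real.log Zp - η * S := by ring
  -- telescoping
  have tele : ∀ n, n ≤ T →
      Real.log (Z n) ≤ Real.log (Z 0) - η * ∑ t ∈ Finset.Icc 1 n, ∑ j, w t j * c t j := by
    intro n
    induction n with
    | zero => intro _; simp
    | succ m ih =>
      intro hm
      have hm' : m ≤ T := by omega
      have hmem : m + 1 ∈ Finset.Icc 1 T := Finset.mem_Icc.mpr ⟨by omega, hm⟩
      have hk := key (m+1) hmem
      simp only [Nat.add_sub_cancel] at hk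
      rw [Finset.sum_Icc_succ_top (by omega : 1 ≤ m + 1)]
      have := ih hm'
      calc Real.log (Z (m+1)) ≤ Real.log (Z m) - η * ∑ j, w (m+1) j * c (m+1) j := hk
        _ ≤ Real.log (Z 0) - η * ∑ t ∈ Finset.Icc 1 m, ∑ j, w t j * c t j
              - η * ∑ j, w (m+1) j * c (m+1) j := by linarith
        _ = Real.log (Z 0) -
            η * ((∑ t ∈ Finset.Icc 1 m, ∑ j, w t j * c t j) + ∑ j, w (m+1) j * c (m+1) j) := by
            ring
  have hZ0 : Z 0 = K := by
    rw [hZ]; simp [hL]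
  intro i
  have hlow : -(L T i) ≤ Real.log (Z T) := by
    have h1 : Real.exp (-(L T i)) ≤ Z T :=
      Finset.single_le_sum (f := fun j => Real.exp (-(L T j)))
        (fun j _ => le_of_lt (Real.exp_pos _)) (Finset.mem_univ i)
    calc -(L T i) = Real.log (Real.exp (-(L T i))) := (Real.log_exp _).symm
      _ ≤ Real.log (Z T) := Real.log_le_log (Real.exp_pos _) h1
  have hLT : L T i = η * (∑ t ∈ Finset.Icc 1 T, c t i)
      + η ^ 2 * ∑ t ∈ Finset.Icc 1 T, (c t i) ^ 2 := by
    rw [hL]; simp only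
    rw [Finset.sum_add_distrib, Finset.mul_sum, Finset.mul_sum]
  have htot := tele T le_rfl
  rw [hZ0] at htot
  set SS := ∑ t ∈ Finset.Icc 1 T, ∑ j, w t j * c t j
  set A := ∑ t ∈ Finset.Icc 1 T, c t i
  set B := ∑ t ∈ Finset.Icc 1 T, (c t i) ^ 2
  have hmain : η * (SS - A) ≤ Real.log K + η ^ 2 * B := by
    rw [hLT] at hlow
    nlinarith [hlow, htot]
  have hfin : SS - A ≤ (Real.log K + η ^ 2 * B) / η := by
    rw [le_div_iff₀ hη0]
    nlinarith [hmain]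
  calc SS - A ≤ (Real.log K + η ^ 2 * B) / η := hfin
    _ = Real.log K / η + η * B := by field_simp
end

section
/- Let K ≥ 2, T ≥ 2, η ∈ (0,1/5], γ = 1/T, and h_1,…,h_T ∈ [−1,1]^K. Define the Fixed-share-variant iterates: q̃_1 is the uniform distribution on [K]; q_t = (1−γ)q̃_t + (γ/K)·1; and q̃_{t+1}(b) is proportional to q_t(b)·exp(−η h_t(b) − η² h_t(b)²). Then for every S ∈ [T] and every sequence b_1,…,b_T ∈ [K] with Σ_{t=2}^T 1{b_t ≠ b_{t−1}} ≤ S−1, Σ_{t=1}^T ⟨q_t, h_t⟩ − Σ_{t=1}^T h_t(b_t) ≤ (S ln(KT) + 2)/η + η Σ_{t=1}^T h_t(b_t)². -/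
lemma exp_key {x : ℝ} (h1 : -(1/5) ≤ x) (h2 : x ≤ 1/5) :
    Real.exp (-x - x ^ 2) ≤ 1 - x := by
  have h1x : (0:ℝ) < 1 - x := by linarith
  have hE2 : (0:ℝ) < Real.exp (x + x ^ 2) := Real.exp_pos _
  have hkey : 1 ≤ (1 - x) * Real.exp (x + x ^ 2) := by
    rcases le_or_gt x 0 with hx0 | hx0
    · have hexp := Real.add_one_le_exp (x + x ^ 2)
      nlinarith [mul_le_mul_of_nonneg_left hexp h1x.le]
    · have h3 : (0:ℝ) ≤ 1 + (x + x ^ 2) / 2 := by nlinarith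
      have h4 : 1 + (x + x ^ 2) / 2 ≤ Real.exp ((x + x ^ 2) / 2) := by
        have := Real.add_one_le_exp ((x + x ^ 2) / 2); linarith
      have h5 : (1 + (x + x ^ 2) / 2) ^ 2 ≤ Real.exp (x + x ^ 2) := by
        calc (1 + (x + x ^ 2) / 2) ^ 2
            ≤ Real.exp ((x + x ^ 2)/2) * Real.exp ((x + x ^ 2)/2) := by nlinarith
          _ = Real.exp (x + x ^ 2) := by rw [← Real.exp_add]; ring_nf
      have hpoly : 1 ≤ (1 - x) * (1 + (x + x ^ 2) / 2) ^ 2 := by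
        nlinarith [sq_nonneg x, mul_pos hx0 hx0,
          mul_nonneg (mul_nonneg hx0.le hx0.le) hx0.le,
          mul_nonneg (mul_nonneg (mul_nonneg hx0.le hx0.le) hx0.le) hx0.le, sq_nonneg (x*x)]
      nlinarith [mul_le_mul_of_nonneg_left h5 h1x.le]
  have hmul : Real.exp (-x - x ^ 2) * Real.exp (x + x ^ 2) = 1 := by
    rw [← Real.exp_add]; ring_nf; exact Real.exp_zero
  nlinarith [hkey, hmul, hE2, Real.exp_pos (-x - x^2)]

set_option maxHeartbeats 2000000 in
/-- Fixed-share Variant, Algorithm 5 in Appendix A.2 /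
Proposition 6. The Fixed-share variant with learning rate `η` and mixing `γ = 1/T`
guarantees, for any benchmark sequence `b_1, …, b_T` with at most `S-1` switches,
`Σ_t ⟨q_t, h_t⟩ - Σ_t h_t(b_t) ≤ (S ln(KT) + 2)/η + η Σ_t h_t(b_t)²`. -/
theorem stmt_3 (K T : ℕ) (hK : 2 ≤ K) (hT : 2 ≤ T)
    (η : ℝ) (hη0 : 0 < η) (hη : η ≤ 1 / 5)
    (γ : ℝ) (hγ : γ = 1 / (T : ℝ))
    (h : ℕ → Fin K → ℝ)
    (hh : ∀ t ∈ Finset.Icc 1 T, ∀ b, |h t b| ≤ 1)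
    (qt q : ℕ → Fin K → ℝ)
    -- q̃_1 is uniform
    (hq1 : ∀ b, qt 1 b = 1 / (K : ℝ))
    -- q_t = (1-γ) q̃_t + (γ/K) 1
    (hq : ∀ t ∈ Finset.Icc 1 T, ∀ b, q t b = (1 - γ) * qt t b + γ / (K : ℝ))
    -- q̃_{t+1}(b) ∝ q_t(b) exp(-η h_t(b) - η² h_t(b)²)
    (hqt : ∀ t ∈ Finset.Icc 1 T, ∀ b,
      qt (t + 1) b =
        q t b * Real.exp (-(η * h t b) - η ^ 2 * (h t b) ^ 2) /
          ∑ j, q t j * Real.exp (-(η * h t j) - η ^ 2 * (h t j) ^ 2)) :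
    ∀ S : ℕ, 1 ≤ S → S ≤ T →
    ∀ b : ℕ → Fin K,
      (∑ t ∈ Finset.Icc 2 T, if b t = b (t - 1) then 0 else 1) ≤ S - 1 →
      (∑ t ∈ Finset.Icc 1 T, ∑ j, q t j * h t j) -
          (∑ t ∈ Finset.Icc 1 T, h t (b t)) ≤
        ((S : ℝ) * Real.log ((K : ℝ) * (T : ℝ)) + 2) / η +
          η * ∑ t ∈ Finset.Icc 1 T, (h t (b t)) ^ 2 := by
  intro S hS1 hST b hb
  have hNE : Nonempty (Fin K) := ⟨⟨0, by omega⟩⟩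
  have hTpos : (0:ℝ) < T := by positivity
  have hT2 : (2:ℝ) ≤ T := by exact_mod_cast hT
  have hKpos : (0:ℝ) < K := by positivity
  have hK2 : (2:ℝ) ≤ K := by exact_mod_cast hK
  have hγ0 : 0 < γ := by rw [hγ]; positivity
  have hγ1 : γ < 1 := by rw [hγ, div_lt_one hTpos]; linarith
  set E : ℕ → Fin K → ℝ := fun t j => Real.exp (-(η * h t j) - η ^ 2 * (h t j) ^ 2) with hEdef
  set Z : ℕ → ℝ := fun t => ∑ j, q t j * E t j with hZdef
  have hEpos : ∀ t j, 0 < E t j := fun t j => Real.exp_pos _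
  have hqt' : ∀ t ∈ Finset.Icc 1 T, ∀ j, qt (t + 1) j = q t j * E t j / Z t :=
    fun t ht j => hqt t ht j
  -- probability facts by induction
  have prob : ∀ t, 1 ≤ t → t ≤ T + 1 → (∀ j, 0 < qt t j) ∧ ∑ j, qt t j = 1 := by
    intro t
    induction t with
    | zero => intro h1 _; omega
    | succ n ih =>
      intro h1 h2
      rcases Nat.eq_zero_or_pos n with hn | hn
      · subst hn
        refine ⟨fun j => by rw [hq1 j]; positivity, ?_⟩
        rw [Finset.sum_congr rfl fun j _ => hq1 j]
        rw [Finset.sum_const, Finset.card_fin]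
        field_simp
        rw [nsmul_eq_mul, mul_one_div_cancel hKpos.ne']
      · have hnT : n ≤ T := by omega
        have hnIcc : n ∈ Finset.Icc 1 T := Finset.mem_Icc.mpr ⟨hn, hnT⟩
        obtain ⟨hpos, hsum⟩ := ih hn (by omega)
        have hqpos : ∀ j, 0 < q n j := by
          intro j
          rw [hq n hnIcc j]
          have h1' : 0 < (1 - γ) * qt n j := mul_pos (by linarith) (hpos j)
          have h2' : 0 < γ / (K:ℝ) := div_pos hγ0 hKpos
          linarith
        have hZpos : 0 < Z n :=
          Finset.sum_pos (fun j _ => mul_pos (hqpos j) (hEpos n j)) Finset.univ_nonempty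
        constructor
        · intro j
          rw [hqt' n hnIcc j]
          exact div_pos (mul_pos (hqpos j) (hEpos n j)) hZpos
        · rw [Finset.sum_congr rfl fun j _ => hqt' n hnIcc j, ← Finset.sum_div,
            ]
          exact div_self hZpos.ne'
  -- derived facts
  have probd : ∀ t ∈ Finset.Icc 1 T, (∀ j, 0 < qt t j) ∧ ∑ j, qt t j = 1 := by
    intro t ht
    obtain ⟨h1, h2⟩ := Finset.mem_Icc.mp ht
    exact prob t h1 (by omega)
  have hqpos2 : ∀ t ∈ Finset.Icc 1 T, ∀ j, 0 < q t j := by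
    intro t ht j
    rw [hq t ht j]
    have h1' := mul_pos (by linarith : (0:ℝ) < 1 - γ) ((probd t ht).1 j)
    have h2' : 0 < γ / (K:ℝ) := div_pos hγ0 hKpos
    linarith
  have hqlb : ∀ t ∈ Finset.Icc 1 T, ∀ j, γ / (K:ℝ) ≤ q t j := by
    intro t ht j
    rw [hq t ht j]
    nlinarith [((probd t ht).1 j).le, (by linarith : (0:ℝ) ≤ 1 - γ)]
  have hqsum : ∀ t ∈ Finset.Icc 1 T, ∑ j, q t j = 1 := by
    intro t ht
    rw [Finset.sum_congr rfl fun j _ => hq t ht j, Finset.sum_add_distrib,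
      ← Finset.mul_sum, (probd t ht).2, Finset.sum_const, Finset.card_fin]
    simp only [nsmul_eq_mul, mul_one]
    field_simp
    ring
  have hqtle1 : ∀ t, 1 ≤ t → t ≤ T + 1 → ∀ j, qt t j ≤ 1 := by
    intro t h1 h2 j
    obtain ⟨hp, hs⟩ := prob t h1 h2
    calc qt t j ≤ ∑ i, qt t i :=
          Finset.single_le_sum (fun i _ => (hp i).le) (Finset.mem_univ j)
      _ = 1 := hs
  have hZposT : ∀ t ∈ Finset.Icc 1 T, 0 < Z t := by
    intro t ht
    exact Finset.sum_pos (fun j _ => mul_pos (hqpos2 t ht j) (hEpos t j)) Finset.univ_nonempty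
  -- Step A
  have stepA : ∀ t ∈ Finset.Icc 1 T, η * (∑ j, q t j * h t j) ≤ -Real.log (Z t) := by
    intro t ht
    have hZle : Z t ≤ 1 - η * ∑ j, q t j * h t j := by
      have hterm : ∀ j ∈ Finset.univ, q t j * E t j ≤ q t j * (1 - η * h t j) := by
        intro j _
        have habs := abs_le.mp (hh t ht j)
        have hx1 : -(1/5 : ℝ) ≤ η * h t j := by nlinarith [habs.1, habs.2]
        have hx2 : η * h t j ≤ 1/5 := by nlinarith [habs.1, habs.2]
        have hek := exp_key hx1 hx2
        have heq : -(η * h t j) - (η * h t j) ^ 2 = -(η * h t j) - η ^ 2 * (h t j) ^ 2 := by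
          ring
        rw [heq] at hek
        exact mul_le_mul_of_nonneg_left hek (hqpos2 t ht j).le
      calc Z t ≤ ∑ j, q t j * (1 - η * h t j) := Finset.sum_le_sum hterm
        _ = (∑ j, q t j) - η * ∑ j, q t j * h t j := by
            rw [Finset.mul_sum, ← Finset.sum_sub_distrib]
            exact Finset.sum_congr rfl fun j _ => by ring
        _ = 1 - η * ∑ j, q t j * h t j := by rw [hqsum t ht]
    have := Real.log_le_sub_one_of_pos (hZposT t ht)
    linarith
  -- Step B
  have stepB : ∀ t ∈ Finset.Icc 1 T, -Real.log (Z t) =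
      (Real.log (qt (t+1) (b t)) - Real.log (q t (b t))) +
        (η * h t (b t) + η ^ 2 * (h t (b t)) ^ 2) := by
    intro t ht
    have hqbt := hqpos2 t ht (b t)
    have hZt := hZposT t ht
    rw [hqt' t ht (b t),
      Real.log_div (mul_pos hqbt (hEpos t (b t))).ne' hZt.ne',
      Real.log_mul hqbt.ne' (hEpos t (b t)).ne']
    have hE' : Real.log (E t (b t)) = -(η * h t (b t)) - η ^ 2 * (h t (b t)) ^ 2 :=
      Real.log_exp _
    rw [hE']; ring
  set SA := ∑ t ∈ Finset.Icc 1 T, (Real.log (qt (t+1) (b t)) - Real.log (q t (b t))) with hSA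
  -- Step C
  have sumC : η * ((∑ t ∈ Finset.Icc 1 T, ∑ j, q t j * h t j) -
      ∑ t ∈ Finset.Icc 1 T, h t (b t)) ≤
      SA + η ^ 2 * ∑ t ∈ Finset.Icc 1 T, (h t (b t)) ^ 2 := by
    have h1 : ∑ t ∈ Finset.Icc 1 T, η * (∑ j, q t j * h t j) ≤
        ∑ t ∈ Finset.Icc 1 T, -Real.log (Z t) := Finset.sum_le_sum stepA
    have h2 : ∑ t ∈ Finset.Icc 1 T, -Real.log (Z t) =
        SA + (η * ∑ t ∈ Finset.Icc 1 T, h t (b t) +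
          η ^ 2 * ∑ t ∈ Finset.Icc 1 T, (h t (b t)) ^ 2) := by
      rw [Finset.sum_congr rfl stepB, Finset.sum_add_distrib, hSA,
        Finset.sum_add_distrib, Finset.mul_sum, Finset.mul_sum]
    rw [← Finset.mul_sum] at h1
    have hring : η * ((∑ t ∈ Finset.Icc 1 T, ∑ j, q t j * h t j) -
        ∑ t ∈ Finset.Icc 1 T, h t (b t)) =
        η * (∑ t ∈ Finset.Icc 1 T, ∑ j, q t j * h t j) -
        η * ∑ t ∈ Finset.Icc 1 T, h t (b t) := by ring
    linarith [h1, h2]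
  -- telescoping split
  have hsplit : SA = Real.log (qt (T+1) (b T)) - Real.log (q 1 (b 1)) +
      ∑ t ∈ Finset.Icc 2 T, (Real.log (qt t (b (t-1))) - Real.log (q t (b t))) := by
    have hre : ∑ t ∈ Finset.Icc 1 T, Real.log (qt (t+1) (b t)) =
        ∑ t ∈ Finset.Icc 2 (T+1), Real.log (qt t (b (t-1))) := by
      rw [show Finset.Icc 2 (T+1) = Finset.map (addRightEmbedding 1) (Finset.Icc 1 T) by
        rw [Finset.map_add_right_Icc]]
      rw [Finset.sum_map]
      simp [addRightEmbedding]
    have htop : ∑ t ∈ Finset.Icc 2 (T+1), Real.log (qt t (b (t-1))) =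
        (∑ t ∈ Finset.Icc 2 T, Real.log (qt t (b (t-1)))) +
          Real.log (qt (T+1) (b ((T+1)-1))) :=
      Finset.sum_Icc_succ_top (by omega : 2 ≤ T + 1) _
    have hbot : ∑ t ∈ Finset.Icc 1 T, Real.log (q t (b t)) =
        Real.log (q 1 (b 1)) + ∑ t ∈ Finset.Icc 2 T, Real.log (q t (b t)) := by
      have hins : Finset.Icc 1 T = insert 1 (Finset.Icc 2 T) := by
        ext x; simp only [Finset.mem_Icc, Finset.mem_insert]; omega
      rw [hins, Finset.sum_insert (by simp)]
    rw [hSA, Finset.sum_sub_distrib, hre, htop, hbot, Finset.sum_sub_distrib]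
    simp only [Nat.add_sub_cancel]
    ring
  have hKT1 : (1:ℝ) ≤ (K:ℝ) * T := by nlinarith
  have hlogKT : 0 ≤ Real.log ((K:ℝ) * T) := Real.log_nonneg hKT1
  -- per-term bound
  have hterm : ∀ t ∈ Finset.Icc 2 T,
      Real.log (qt t (b (t-1))) - Real.log (q t (b t)) ≤
        -Real.log (1 - γ) + (if b t = b (t-1) then (0:ℝ) else 1) * Real.log ((K:ℝ) * T) := by
    intro t ht
    obtain ⟨ht2, htT⟩ := Finset.mem_Icc.mp ht
    have ht1 : t ∈ Finset.Icc 1 T := Finset.mem_Icc.mpr ⟨by omega, htT⟩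
    have hqtpos := (probd t ht1).1
    have hqtle := hqtle1 t (by omega) (by omega)
    have hlog1γ : Real.log (1 - γ) ≤ 0 := Real.log_nonpos (by linarith) (by linarith)
    by_cases hbt : b t = b (t-1)
    · rw [if_pos hbt, ← hbt]
      have hge : (1 - γ) * qt t (b t) ≤ q t (b t) := by
        rw [hq t ht1 (b t)]
        have : 0 < γ / (K:ℝ) := div_pos hγ0 hKpos
        linarith
      have hpos' : 0 < (1 - γ) * qt t (b t) := mul_pos (by linarith) (hqtpos (b t))
      have hll := Real.log_le_log hpos' hge
      rw [Real.log_mul (by linarith : (1:ℝ) - γ ≠ 0) (hqtpos (b t)).ne'] at hll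
      simp only [zero_mul, add_zero]
      linarith
    · rw [if_neg hbt]
      have hlb := hqlb t ht1 (b t)
      have hγK : γ / (K:ℝ) = (((K:ℝ) * T))⁻¹ := by
        rw [hγ]; field_simp
      rw [hγK] at hlb
      have h1' : Real.log (((K:ℝ) * T)⁻¹) ≤ Real.log (q t (b t)) :=
        Real.log_le_log (by positivity) hlb
      rw [Real.log_inv] at h1'
      have h2' : Real.log (qt t (b (t-1))) ≤ 0 :=
        Real.log_nonpos (hqtpos _).le (hqtle _)
      linarith
  -- switch count
  have hswitch : (∑ t ∈ Finset.Icc 2 T, if b t = b (t-1) then (0:ℝ) else 1) ≤ (S:ℝ) - 1 := by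
    have hc : (∑ t ∈ Finset.Icc 2 T, if b t = b (t-1) then (0:ℝ) else 1)
        = ((∑ t ∈ Finset.Icc 2 T, if b t = b (t-1) then 0 else 1 : ℕ) : ℝ) := by
      push_cast; rfl
    rw [hc]
    calc ((∑ t ∈ Finset.Icc 2 T, if b t = b (t-1) then 0 else 1 : ℕ) : ℝ)
        ≤ ((S - 1 : ℕ) : ℝ) := Nat.cast_le.mpr hb
      _ = (S:ℝ) - 1 := by rw [Nat.cast_sub hS1]; simp
  -- sum of per-term bounds
  have hsum2 : ∑ t ∈ Finset.Icc 2 T, (Real.log (qt t (b (t-1))) - Real.log (q t (b t))) ≤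
      ((T:ℝ) - 1) * (-Real.log (1 - γ)) + ((S:ℝ) - 1) * Real.log ((K:ℝ) * T) := by
    have hlog1γ : Real.log (1 - γ) ≤ 0 := Real.log_nonpos (by linarith) (by linarith)
    calc ∑ t ∈ Finset.Icc 2 T, (Real.log (qt t (b (t-1))) - Real.log (q t (b t)))
        ≤ ∑ t ∈ Finset.Icc 2 T, (-Real.log (1 - γ) +
            (if b t = b (t-1) then (0:ℝ) else 1) * Real.log ((K:ℝ) * T)) :=
          Finset.sum_le_sum hterm
      _ = ((Finset.Icc 2 T).card : ℝ) * (-Real.log (1 - γ)) +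
            (∑ t ∈ Finset.Icc 2 T, if b t = b (t-1) then (0:ℝ) else 1) *
              Real.log ((K:ℝ) * T) := by
          rw [Finset.sum_add_distrib, Finset.sum_const, ← Finset.sum_mul, nsmul_eq_mul]
      _ ≤ ((T:ℝ) - 1) * (-Real.log (1 - γ)) + ((S:ℝ) - 1) * Real.log ((K:ℝ) * T) := by
          have hcard : ((Finset.Icc 2 T).card : ℝ) = (T:ℝ) - 1 := by
            rw [Nat.card_Icc]
            have : T + 1 - 2 = T - 1 := by omega
            rw [this, Nat.cast_sub (by omega : 1 ≤ T)]; simp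
          rw [hcard]
          exact add_le_add le_rfl (mul_le_mul_of_nonneg_right hswitch hlogKT)
  have hlog1γb : ((T:ℝ) - 1) * (-Real.log (1 - γ)) ≤ 1 := by
    have hT1 : (0:ℝ) < (T:ℝ) - 1 := by linarith
    have h1γ : 1 - γ = ((T:ℝ) - 1) / T := by rw [hγ]; field_simp
    have hneg : -Real.log (1 - γ) = Real.log ((T:ℝ) / ((T:ℝ) - 1)) := by
      rw [h1γ, ← Real.log_inv]
      congr 1
      field_simp
    rw [hneg]
    have hlog := Real.log_le_sub_one_of_pos (by positivity : (0:ℝ) < (T:ℝ) / ((T:ℝ) - 1))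
    have heq1 : (T:ℝ) / ((T:ℝ) - 1) - 1 = 1 / ((T:ℝ) - 1) := by field_simp; ring
    rw [heq1] at hlog
    calc ((T:ℝ) - 1) * Real.log ((T:ℝ) / ((T:ℝ) - 1)) ≤ ((T:ℝ) - 1) * (1 / ((T:ℝ) - 1)) :=
          mul_le_mul_of_nonneg_left hlog hT1.le
      _ = 1 := by field_simp
  have hend1 : Real.log (qt (T+1) (b T)) ≤ 0 :=
    Real.log_nonpos ((prob (T+1) (by omega) le_rfl).1 _).le (hqtle1 (T+1) (by omega) le_rfl _)
  have hend2 : -Real.log (q 1 (b 1)) = Real.log (K:ℝ) := by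
    have h1Icc : (1:ℕ) ∈ Finset.Icc 1 T := Finset.mem_Icc.mpr ⟨le_rfl, by omega⟩
    have hq1v : q 1 (b 1) = ((K:ℝ))⁻¹ := by
      rw [hq 1 h1Icc, hq1]
      field_simp
      ring
    rw [hq1v, Real.log_inv, neg_neg]
  have hKle : Real.log (K:ℝ) ≤ Real.log ((K:ℝ) * T) :=
    Real.log_le_log hKpos (by nlinarith)
  have hSAbound : SA ≤ (S:ℝ) * Real.log ((K:ℝ) * T) + 2 := by
    rw [hsplit]
    have hS1' : (1:ℝ) ≤ S := by exact_mod_cast hS1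
    nlinarith [hend1, hend2, hsum2, hlog1γb, hKle, hlogKT]
  -- final assembly
  have hfin : η * ((∑ t ∈ Finset.Icc 1 T, ∑ j, q t j * h t j) -
      ∑ t ∈ Finset.Icc 1 T, h t (b t)) ≤
      ((S:ℝ) * Real.log ((K:ℝ) * T) + 2) +
        η ^ 2 * ∑ t ∈ Finset.Icc 1 T, (h t (b t)) ^ 2 := by
    linarith [sumC, hSAbound]
  have h2' : (∑ t ∈ Finset.Icc 1 T, ∑ j, q t j * h t j) -
      (∑ t ∈ Finset.Icc 1 T, h t (b t)) - η * ∑ t ∈ Finset.Icc 1 T, (h t (b t)) ^ 2 ≤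
      ((S:ℝ) * Real.log ((K:ℝ) * T) + 2) / η := by
    rw [le_div_iff₀ hη0]
    nlinarith [hfin]
  linarith
end

section
/- Let K ≥ 2, learning rates η_1,…,η_K ∈ (0,1/5], and c_1,…,c_T ∈ [−1,1]^K. Define the weights w_t(i) proportional to η_i·exp(Σ_{τ<t}(η_i r_τ(i) − η_i² r_τ(i)²)), where r_τ(i) = ⟨w_τ, c_τ⟩ − c_τ(i) (so the w_t are defined recursively). Then for every i ∈ [K], Σ_{t=1}^T (⟨w_t, c_t⟩ − c_t(i)) ≤ (ln K)/η_i + η_i Σ_{t=1}^T (⟨w_t, c_t⟩ − c_t(i))². -/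
lemma key_ineq (x : ℝ) (hx : |x| ≤ 2/5) : Real.exp (x - x^2) ≤ 1 + x := by
  obtain ⟨h1, h2⟩ := abs_le.mp hx
  rcases le_or_gt 0 x with hx0 | hx0
  · set y := x - x^2 with hy
    have hpos : 0 < 1 - y := by nlinarith
    have h3 : 1 - y ≤ Real.exp (-y) := by
      have := Real.add_one_le_exp (-y); linarith
    have h4 : Real.exp y ≤ 1 / (1 - y) := by
      rw [le_div_iff₀ hpos]
      calc Real.exp y * (1 - y) ≤ Real.exp y * Real.exp (-y) := by
            exact mul_le_mul_of_nonneg_left h3 (Real.exp_pos y).le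
        _ = 1 := by rw [← Real.exp_add]; simp
    refine h4.trans ?_
    rw [div_le_iff₀ hpos]
    nlinarith
  · set t := x^2 - x with hts
    have ht0 : 0 ≤ t := by nlinarith
    have hq : 1 + t + t^2/2 ≤ Real.exp t := Real.quadratic_le_exp_of_nonneg ht0
    have hqpos : 0 < 1 + t + t^2/2 := by nlinarith
    have h4 : Real.exp (x - x^2) ≤ 1 / (1 + t + t^2/2) := by
      have hxe : x - x^2 = -t := by ring
      rw [hxe, Real.exp_neg]
      exact one_div_le_one_div_of_le hqpos hq |>.trans_eq' (by rw [one_div])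
    refine h4.trans ?_
    rw [div_le_iff₀ hqpos]
    nlinarith [sq_nonneg x, sq_nonneg (x*(1+x)), mul_nonneg (neg_nonneg.mpr hx0.le) (by linarith : (0:ℝ) ≤ x + 2/5)]

/-- Hedge Variant 2, Algorithm 6 in Appendix A.3.
The Hedge variant with individual learning rates
`w_t(i) ∝ η_i exp(Σ_{τ<t}(η_i r_τ(i) - η_i² r_τ(i)²))`, where
`r_τ(i) = ⟨w_τ, c_τ⟩ - c_τ(i)`, satisfies for every `i`,
`Σ_t (⟨w_t, c_t⟩ - c_t(i)) ≤ ln K / η_i + η_i Σ_t (⟨w_t, c_t⟩ - c_t(i))²`. -/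
theorem stmt_4 (K T : ℕ) (hK : 2 ≤ K)
    (η : Fin K → ℝ) (hη0 : ∀ i, 0 < η i) (hη : ∀ i, η i ≤ 1 / 5)
    (c : ℕ → Fin K → ℝ)
    (hc : ∀ t ∈ Finset.Icc 1 T, ∀ i, |c t i| ≤ 1)
    (w r : ℕ → Fin K → ℝ)
    -- instantaneous regret
    (hr : ∀ t ∈ Finset.Icc 1 T, ∀ i, r t i = (∑ j, w t j * c t j) - c t i)
    -- the (recursively defined) weights
    (hw : ∀ t ∈ Finset.Icc 1 T, ∀ i,
      w t i =
        η i * Real.exp (∑ τ ∈ Finset.Icc 1 (t - 1),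
            (η i * r τ i - (η i) ^ 2 * (r τ i) ^ 2)) /
          ∑ j, η j * Real.exp (∑ τ ∈ Finset.Icc 1 (t - 1),
            (η j * r τ j - (η j) ^ 2 * (r τ j) ^ 2))) :
    ∀ i : Fin K,
      (∑ t ∈ Finset.Icc 1 T, ((∑ j, w t j * c t j) - c t i)) ≤
        Real.log K / η i +
          η i * ∑ t ∈ Finset.Icc 1 T, ((∑ j, w t j * c t j) - c t i) ^ 2 := by
  have hKpos : 0 < K := by omega
  haveI : NeZero K := ⟨by omega⟩
  set S : ℕ → Fin K → ℝ :=
    fun t j => ∑ τ ∈ Finset.Icc 1 t, (η j * r τ j - (η j) ^ 2 * (r τ j) ^ 2) with hSdef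
  set Φ : ℕ → ℝ := fun t => ∑ j, Real.exp (S t j) with hΦdef
  have hw' : ∀ t ∈ Finset.Icc 1 T, ∀ i, w t i =
      η i * Real.exp (S (t-1) i) / ∑ j, η j * Real.exp (S (t-1) j) := hw
  -- denominator positivity
  have hD : ∀ t : ℕ, 0 < ∑ j, η j * Real.exp (S t j) := by
    intro t
    apply Finset.sum_pos
    · intro j _; exact mul_pos (hη0 j) (Real.exp_pos _)
    · exact Finset.univ_nonempty
  -- basic facts for rounds t ∈ [1, T]
  have hwpos : ∀ t ∈ Finset.Icc 1 T, ∀ j, 0 ≤ w t j := by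
    intro t ht j
    rw [hw' t ht j]
    apply div_nonneg (le_of_lt (mul_pos (hη0 j) (Real.exp_pos _))) (hD (t-1)).le
  have hwsum : ∀ t ∈ Finset.Icc 1 T, ∑ j, w t j = 1 := by
    intro t ht
    have : ∑ j, w t j = (∑ j, η j * Real.exp (S (t-1) j)) / (∑ j, η j * Real.exp (S (t-1) j)) := by
      rw [Finset.sum_div]
      exact Finset.sum_congr rfl fun j _ => hw' t ht j
    rw [this, div_self (hD (t-1)).ne']
  have habs : ∀ t ∈ Finset.Icc 1 T, |∑ j, w t j * c t j| ≤ 1 := by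
    intro t ht
    calc |∑ j, w t j * c t j| ≤ ∑ j, |w t j * c t j| := Finset.abs_sum_le_sum_abs _ _
      _ ≤ ∑ j, w t j := by
          apply Finset.sum_le_sum
          intro j _
          rw [abs_mul, abs_of_nonneg (hwpos t ht j)]
          calc w t j * |c t j| ≤ w t j * 1 := by
                exact mul_le_mul_of_nonneg_left (hc t ht j) (hwpos t ht j)
            _ = w t j := mul_one _
      _ = 1 := hwsum t ht
  have hrabs : ∀ t ∈ Finset.Icc 1 T, ∀ j, |r t j| ≤ 2 := by
    intro t ht j
    rw [hr t ht j]
    calc |(∑ k, w t k * c t k) - c t j| ≤ |∑ k, w t k * c t k| + |c t j| := abs_sub _ _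
      _ ≤ 1 + 1 := add_le_add (habs t ht) (hc t ht j)
      _ = 2 := by norm_num
  have hzero : ∀ t ∈ Finset.Icc 1 T, ∑ j, w t j * r t j = 0 := by
    intro t ht
    have : ∑ j, w t j * r t j
        = (∑ j, w t j) * (∑ k, w t k * c t k) - ∑ j, w t j * c t j := by
      rw [Finset.sum_mul, ← Finset.sum_sub_distrib]
      refine Finset.sum_congr rfl fun j _ => ?_
      rw [hr t ht j]; ring
    rw [this, hwsum t ht, one_mul, sub_self]
  -- potential decrease
  have hstep : ∀ t ∈ Finset.Icc 1 T, Φ t ≤ Φ (t - 1) := by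
    intro t ht
    obtain ⟨ht1, ht2⟩ := Finset.mem_Icc.mp ht
    have htsplit : ∀ j, S t j = S (t-1) j +
        (η j * r t j - (η j) ^ 2 * (r t j) ^ 2) := by
      intro j
      have h1 : t - 1 + 1 = t := by omega
      have h2 := Finset.sum_Icc_succ_top (a := 1) (b := t - 1) (by omega)
        (fun τ => η j * r τ j - (η j) ^ 2 * (r τ j) ^ 2)
      rw [h1] at h2
      simpa only [hSdef] using h2
    have hΦt : Φ t = ∑ j, Real.exp (S (t-1) j) *
        Real.exp (η j * r t j - (η j) ^ 2 * (r t j) ^ 2) := by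
      refine Finset.sum_congr rfl fun j _ => ?_
      rw [htsplit j, Real.exp_add]
    have hbound : ∀ j : Fin K, Real.exp (η j * r t j - (η j) ^ 2 * (r t j) ^ 2)
        ≤ 1 + η j * r t j := by
      intro j
      have hx : |η j * r t j| ≤ 2/5 := by
        rw [abs_mul, abs_of_pos (hη0 j)]
        calc η j * |r t j| ≤ (1/5) * 2 := by
              apply mul_le_mul (hη j) (hrabs t ht j) (abs_nonneg _) (by norm_num)
          _ = 2/5 := by norm_num
      have := key_ineq (η j * r t j) hx
      calc Real.exp (η j * r t j - (η j) ^ 2 * (r t j) ^ 2)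
          = Real.exp (η j * r t j - (η j * r t j) ^ 2) := by ring_nf
        _ ≤ 1 + η j * r t j := this
    have hsum0 : ∑ j, Real.exp (S (t-1) j) * (η j * r t j) = 0 := by
      set D := ∑ j, η j * Real.exp (S (t-1) j) with hDdef
      have hDpos := hD (t-1)
      have : ∑ j, Real.exp (S (t-1) j) * (η j * r t j)
          = D * ∑ j, w t j * r t j := by
        rw [Finset.mul_sum]
        refine Finset.sum_congr rfl fun j _ => ?_
        rw [hw' t ht j, ← hDdef]
        field_simp
        rw [mul_div_assoc, div_self (show D ≠ 0 from hDpos.ne'), mul_one]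
      rw [this, hzero t ht, mul_zero]
    calc Φ t = ∑ j, Real.exp (S (t-1) j) *
          Real.exp (η j * r t j - (η j) ^ 2 * (r t j) ^ 2) := hΦt
      _ ≤ ∑ j, Real.exp (S (t-1) j) * (1 + η j * r t j) := by
          apply Finset.sum_le_sum
          intro j _
          exact mul_le_mul_of_nonneg_left (hbound j) (Real.exp_pos _).le
      _ = Φ (t-1) + ∑ j, Real.exp (S (t-1) j) * (η j * r t j) := by
          rw [hΦdef]
          rw [← Finset.sum_add_distrib]
          refine Finset.sum_congr rfl fun j _ => ?_
          ring
      _ = Φ (t-1) := by rw [hsum0, add_zero]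
  -- induction: Φ t ≤ K
  have hΦ0 : Φ 0 = K := by
    rw [hΦdef]
    simp [hSdef]
  have hmain : ∀ t, t ≤ T → Φ t ≤ K := by
    intro t
    induction t with
    | zero => intro _; rw [hΦ0]
    | succ n ih =>
        intro h
        have hmem : n + 1 ∈ Finset.Icc 1 T := Finset.mem_Icc.mpr ⟨by omega, h⟩
        have := hstep (n+1) hmem
        simp only [Nat.add_sub_cancel] at this
        exact this.trans (ih (by omega))
  intro i
  -- single term bound
  have hsingle : Real.exp (S T i) ≤ K := by
    calc Real.exp (S T i) ≤ Φ T := by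
          rw [hΦdef]
          exact Finset.single_le_sum (fun j _ => (Real.exp_pos (S T j)).le)
            (Finset.mem_univ i)
      _ ≤ K := hmain T le_rfl
  have hlog : S T i ≤ Real.log K := by
    rw [Real.le_log_iff_exp_le (by exact_mod_cast hKpos)]
    exact hsingle
  have hSexp : S T i = η i * (∑ t ∈ Finset.Icc 1 T, r t i)
      - (η i)^2 * (∑ t ∈ Finset.Icc 1 T, (r t i)^2) := by
    simp only [hSdef]
    rw [Finset.sum_sub_distrib, Finset.mul_sum, Finset.mul_sum]
  set R := ∑ t ∈ Finset.Icc 1 T, r t i with hR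
  set Q := ∑ t ∈ Finset.Icc 1 T, (r t i)^2 with hQ
  have hηi := hη0 i
  have hfin : R ≤ Real.log K / η i + η i * Q := by
    have h1 : η i * R - (η i)^2 * Q ≤ Real.log K := hSexp ▸ hlog
    rw [div_add' _ _ _ hηi.ne', le_div_iff₀ hηi]
    nlinarith
  have hgoalR : (∑ t ∈ Finset.Icc 1 T, ((∑ j, w t j * c t j) - c t i)) = R := by
    refine Finset.sum_congr rfl fun t ht => ?_
    rw [hr t ht i]
  have hgoalQ : (∑ t ∈ Finset.Icc 1 T, ((∑ j, w t j * c t j) - c t i)^2) = Q := by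
    refine Finset.sum_congr rfl fun t ht => ?_
    rw [hr t ht i]
  rw [hgoalR, hgoalQ]
  exact hfin
end

section
/- Let η > 0, δ ∈ (0,1], and let φ(z) = (1/η)·ln(1/z) with Bregman divergence D_φ(z, z') = φ(z) − φ(z') − φ'(z')(z − z'). Let r_1,…,r_T ∈ ℝ be arbitrary, set z_1 = 1, and define z_{t+1} = argmin_{z ∈ [δ,1]} (−r_t·z + D_φ(z, z_t)). Then for every S ≥ 1 and every sequence u_1,…,u_T ∈ [δ,1] with Σ_{t=2}^T 1{u_t ≠ u_{t−1}} ≤ S − 1, the following holds: −Σ_{t=1}^T z_t·r_t + Σ_{t=1}^T u_t·r_t ≤ η Σ_{t=1}^T z_t·r_t² + 2S/(η δ). -/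
/-- The one-sided log-barrier regularizer `φ(z) = (1/η) ln(1/z)`. -/
noncomputable def phi (η z : ℝ) : ℝ := (1 / η) * Real.log (1 / z)

/-- Its Bregman divergence `D_φ(z, z') = φ(z) - φ(z') - φ'(z')(z - z')`,
where `φ'(z') = -1/(η z')`. -/
noncomputable def Dphi (η z z' : ℝ) : ℝ := phi η z - phi η z' + (z - z') / (η * z')

lemma log_le_two_sqrt {w : ℝ} (hw : 0 < w) :
    Real.log w ≤ 2 * (Real.sqrt w - 1) := by
  have hv : 0 < Real.sqrt w := Real.sqrt_pos.2 hw
  have h1 : Real.log (Real.sqrt w) ≤ Real.sqrt w - 1 := Real.log_le_sub_one_of_pos hv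
  have h2 : Real.log w = 2 * Real.log (Real.sqrt w) := by
    rw [Real.log_sqrt hw.le]; ring
  linarith

lemma one_sub_inv_le_log {y : ℝ} (hy : 0 < y) : 1 - 1/y ≤ Real.log y := by
  have h := Real.log_le_sub_one_of_pos (show (0:ℝ) < 1/y by positivity)
  rw [one_div, Real.log_inv] at h
  rw [one_div]
  linarith

lemma g_nonneg {w : ℝ} (hw : 0 < w) : 0 ≤ (w - 1) - Real.log w := by
  linarith [Real.log_le_sub_one_of_pos hw]

lemma g_le {w : ℝ} (hw : 0 < w) : (w - 1) - Real.log w ≤ (w-1)^2 / w := by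
  have h := one_sub_inv_le_log hw
  have h2 : (w - 1) - Real.log w ≤ (w - 1) - (1 - 1/w) := by linarith
  refine h2.trans (le_of_eq ?_)
  field_simp

lemma g_key {w c : ℝ} (hw : 0 < w) (hwc : w ≤ c) (hc : 1 ≤ c) :
    (w - 1)^2 ≤ 4 * c * ((w - 1) - Real.log w) := by
  set v := Real.sqrt w with hv
  have hv0 : 0 < v := Real.sqrt_pos.2 hw
  have hsq : v * v = w := Real.mul_self_sqrt hw.le
  have hlog : Real.log w ≤ 2 * (v - 1) := log_le_two_sqrt hw
  have h1 : (v - 1)^2 ≤ (w - 1) - Real.log w := by nlinarith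
  have hvc : v ≤ c := by nlinarith [sq_nonneg (v - 1)]
  have h2 : (v + 1)^2 ≤ 4 * c := by nlinarith
  have h3 : (w - 1)^2 = (v - 1)^2 * (v + 1)^2 := by nlinarith
  calc (w - 1)^2 = (v - 1)^2 * (v + 1)^2 := h3
    _ ≤ (v - 1)^2 * (4 * c) := by
        exact mul_le_mul_of_nonneg_left h2 (sq_nonneg _)
    _ ≤ ((w - 1) - Real.log w) * (4 * c) := by
        apply mul_le_mul_of_nonneg_right h1; positivity
    _ = 4 * c * ((w - 1) - Real.log w) := by ring

lemma quad_bound {a c s q : ℝ} (hc : 0 < c) (hq : s^2 ≤ 4 * c * q) :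
    a * s - q ≤ c * a^2 := by
  nlinarith [sq_nonneg (2*c*a - s)]

lemma Dphi_eq {η x y : ℝ} (hη : 0 < η) (hx : 0 < x) (hy : 0 < y) :
    Dphi η x y = (1/η) * ((x/y - 1) - Real.log (x/y)) := by
  unfold Dphi phi
  rw [one_div x, one_div y, Real.log_inv, Real.log_inv,
    Real.log_div hx.ne' hy.ne']
  field_simp
  ring

lemma Dphi_nonneg {η δ x y : ℝ} (hη : 0 < η) (hx : 0 < x) (hy : 0 < y) :
    0 ≤ Dphi η x y := by
  rw [Dphi_eq hη hx hy]
  have hw : 0 < x / y := by positivity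
  have := Real.log_le_sub_one_of_pos hw
  have h1 : (0:ℝ) ≤ 1/η := by positivity
  nlinarith

lemma Dphi_le {η δ x y : ℝ} (hη : 0 < η) (hδ0 : 0 < δ)
    (hxl : δ ≤ x) (hxu : x ≤ 1) (hyl : δ ≤ y) (hyu : y ≤ 1) :
    Dphi η x y ≤ 2 / (η * δ) := by
  have hx : 0 < x := lt_of_lt_of_le hδ0 hxl
  have hy : 0 < y := lt_of_lt_of_le hδ0 hyl
  rw [Dphi_eq hη hx hy]
  have hw : 0 < x / y := by positivity
  have hlog : 1 - 1/(x/y) ≤ Real.log (x/y) := by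
    have h := Real.log_le_sub_one_of_pos (show (0:ℝ) < 1/(x/y) by positivity)
    rw [one_div, Real.log_inv] at h
    rw [one_div]; linarith
  have hwy : 1/(x/y) = y/x := one_div_div x y
  have h1 : x/y ≤ 1/δ := div_le_div₀ zero_le_one hxu hδ0 hyl
  have h2 : y/x ≤ 1/δ := div_le_div₀ zero_le_one hyu hδ0 hxl
  have h3 : (x/y - 1) - Real.log (x/y) ≤ 2/δ := by
    rw [hwy] at hlog
    have e : (2:ℝ)/δ = 1/δ + 1/δ := by ring
    rw [e]; linarith
  calc (1/η) * ((x/y - 1) - Real.log (x/y)) ≤ (1/η) * (2/δ) := by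
        apply mul_le_mul_of_nonneg_left h3; positivity
    _ = 2/(η*δ) := by field_simp

lemma three_point (η z z' x : ℝ) (hη : η ≠ 0) (hz : z ≠ 0) (hz' : z' ≠ 0) :
    Dphi η x z - Dphi η x z' - Dphi η z' z = (x - z') * (1/(η*z) - 1/(η*z')) := by
  unfold Dphi
  field_simp
  ring

set_option maxHeartbeats 2000000 in
lemma omd_step (η δ : ℝ) (hη : 0 < η) (hδ0 : 0 < δ) (hδ1 : δ ≤ 1)
    (r z z' u : ℝ) (hzl : δ ≤ z) (hzu : z ≤ 1) (hz'l : δ ≤ z') (hz'u : z' ≤ 1)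
    (hul : δ ≤ u) (huu : u ≤ 1)
    (hmin : ∀ y ∈ Set.Icc δ 1, -r * z' + Dphi η z' z ≤ -r * y + Dphi η y z) :
    r * (u - z) ≤ η * z * r^2 + Dphi η u z - Dphi η u z' := by
  have hz0 : 0 < z := lt_of_lt_of_le hδ0 hzl
  have hz'0 : 0 < z' := lt_of_lt_of_le hδ0 hz'l
  have hu0 : 0 < u := lt_of_lt_of_le hδ0 hul
  obtain ⟨G, hGdef⟩ : ∃ G : ℝ, G = 1/(η*z) - 1/(η*z') - r := ⟨_, rfl⟩
  -- first-order optimality: 0 ≤ G * (u - z')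
  have hG : 0 ≤ G * (u - z') := by
    rcases eq_or_ne u z' with h | h
    · simp [h]
    · by_contra hneg
      push_neg at hneg
      obtain ⟨m, hm⟩ : ∃ m : ℝ, m = -(G * (u - z')) := ⟨_, rfl⟩
      have hm0 : 0 < m := by rw [hm]; linarith
      have husq : 0 < (u - z')^2 :=
        lt_of_le_of_ne (sq_nonneg _) (Ne.symm (pow_ne_zero 2 (sub_ne_zero.mpr h)))
      obtain ⟨K, hK⟩ : ∃ K : ℝ, K = (u - z')^2 / (η * δ^2) := ⟨_, rfl⟩
      have hK0 : 0 < K := by rw [hK]; exact div_pos husq (by positivity)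
      have claim : ∀ t : ℝ, 0 < t → t ≤ 1 → m ≤ t * K := by
        intro t ht0 ht1
        obtain ⟨y, hy⟩ : ∃ y : ℝ, y = z' + t * (u - z') := ⟨_, rfl⟩
        have hyl : δ ≤ y := by rw [hy]; nlinarith
        have hyu : y ≤ 1 := by rw [hy]; nlinarith
        have hy0 : 0 < y := lt_of_lt_of_le hδ0 hyl
        have h0 := hmin y ⟨hyl, hyu⟩
        have htp := three_point η z z' y hη.ne' hz0.ne' hz'0.ne'
        have hyz' : y - z' = t * (u - z') := by rw [hy]; ring
        have e1 : Dphi η y z - Dphi η z' z - r * (y - z') =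
            Dphi η y z' + G * (y - z') := by
          rw [hGdef]; linear_combination htp
        have h1 : 0 ≤ Dphi η y z' + G * (y - z') := by
          rw [← e1]; nlinarith [h0]
        rw [hyz'] at h1
        -- bound Dphi η y z'
        have hw : 0 < y / z' := by positivity
        have hDb : Dphi η y z' ≤ t^2 * K := by
          rw [Dphi_eq hη hy0 hz'0]
          have h2 := g_le hw
          have h3 : (y/z' - 1)^2 / (y/z') = (y - z')^2 / (z' * y) := by
            field_simp
          have h4 : (y - z')^2 / (z' * y) ≤ (y - z')^2 / (δ^2) := by
            apply div_le_div_of_nonneg_left (by positivity) (by positivity)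
            nlinarith
          have h5 : (y - z')^2 = t^2 * (u - z')^2 := by rw [hy]; ring
          calc (1:ℝ)/η * ((y/z' - 1) - Real.log (y/z'))
              ≤ (1/η) * ((y - z')^2 / δ^2) := by
                apply mul_le_mul_of_nonneg_left _ (by positivity)
                calc (y/z' - 1) - Real.log (y/z') ≤ (y/z' - 1)^2 / (y/z') := h2
                  _ = (y - z')^2 / (z' * y) := h3
                  _ ≤ (y - z')^2 / δ^2 := h4
            _ = t^2 * K := by rw [hK, h5]; field_simp
        have hm' : t * m ≤ t * (t * K) := by
          have e5 : t * m = -(G * (t * (u - z'))) := by rw [hm]; ring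
          have e4 : t * (t * K) = t^2 * K := by ring
          linarith [h1, hDb, e5, e4]
        exact le_of_mul_le_mul_left hm' ht0
      have ht0 : 0 < min 1 (m / (2*K)) := lt_min one_pos (by positivity)
      have hcl := claim _ ht0 (min_le_left _ _)
      have h7 : min 1 (m / (2*K)) * K ≤ (m / (2*K)) * K :=
        mul_le_mul_of_nonneg_right (min_le_right _ _) hK0.le
      have h8 : (m / (2*K)) * K = m / 2 := by field_simp
      linarith
  -- local norm bound
  have hlocal : r * (z' - z) - Dphi η z' z ≤ η * z * r^2 := by
    have hw : 0 < z' / z := by positivity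
    have hwc : z' / z ≤ 1 / z := by gcongr
    have hc1 : (1:ℝ) ≤ 1 / z := by
      rw [le_div_iff₀ hz0]; linarith
    have hkey := g_key hw hwc hc1
    have hqb := quad_bound (show (0:ℝ) < 1/z by positivity) hkey
      (a := η * r * z)
    have hDe := Dphi_eq hη hz'0 hz0
    have e : r * (z' - z) = (1/η) * ((η*r*z) * (z'/z - 1)) := by
      field_simp
    have e2 : (1/η) * ((1/z) * (η*r*z)^2) = η * z * r^2 := by
      field_simp
    have := mul_le_mul_of_nonneg_left hqb (show (0:ℝ) ≤ 1/η by positivity)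
    calc r * (z' - z) - Dphi η z' z
        = (1/η) * ((η*r*z) * (z'/z - 1) - ((z'/z - 1) - Real.log (z'/z))) := by
          rw [hDe, e]; ring
      _ ≤ (1/η) * ((1/z) * (η*r*z)^2) := this
      _ = η * z * r^2 := e2
  -- combine
  have htpu := three_point η z z' u hη.ne' hz0.ne' hz'0.ne'
  have e3 : r * (u - z') = -(G * (u - z')) + (u - z') * (1/(η*z) - 1/(η*z')) := by
    rw [hGdef]; ring
  have key2 : r * (u - z) = r * (u - z') + r * (z' - z) := by ring
  linarith [hG, hlocal, htpu, e3, key2]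

lemma omd_sum (η δ : ℝ) (hη : 0 < η) (hδ0 : 0 < δ) (hδ1 : δ ≤ 1)
    (r z u : ℕ → ℝ) (hz1 : z 1 = 1)
    (T : ℕ) (hT : 1 ≤ T)
    (hzmin : ∀ t ∈ Finset.Icc 1 T,
      z (t + 1) ∈ Set.Icc δ 1 ∧
      ∀ y ∈ Set.Icc δ 1,
        -(r t) * z (t + 1) + Dphi η (z (t + 1)) (z t) ≤ -(r t) * y + Dphi η y (z t))
    (hu : ∀ t ∈ Finset.Icc 1 T, u t ∈ Set.Icc δ 1) :
    (∑ t ∈ Finset.Icc 1 T, r t * (u t - z t)) + Dphi η (u T) (z (T+1)) ≤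
      η * (∑ t ∈ Finset.Icc 1 T, z t * (r t)^2) + 2/(η*δ)
      + (∑ t ∈ Finset.Icc 2 T, if u t = u (t-1) then (0:ℝ) else 1) * (2/(η*δ)) := by
  induction T, hT using Nat.le_induction with
  | base =>
    have h1 := hzmin 1 (by simp)
    have hu1 := hu 1 (by simp)
    have hstep := omd_step η δ hη hδ0 hδ1 (r 1) (z 1) (z 2) (u 1)
      (by rw [hz1]; exact hδ1) (by rw [hz1]) h1.1.1 h1.1.2 hu1.1 hu1.2
      (by simpa using h1.2)
    have hDb : Dphi η (u 1) (z 1) ≤ 2/(η*δ) :=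
      Dphi_le hη hδ0 hu1.1 hu1.2 (by rw [hz1]; exact hδ1) (by rw [hz1])
    have he : Finset.Icc 2 1 = (∅ : Finset ℕ) := by decide
    simp only [Finset.Icc_self, Finset.sum_singleton, he, Finset.sum_empty]
    linarith
  | succ T hT ih =>
    have hsub : ∀ t, t ∈ Finset.Icc 1 T → t ∈ Finset.Icc 1 (T+1) := by
      intro t ht; simp only [Finset.mem_Icc] at ht ⊢; omega
    have ihh := ih (fun t ht => hzmin t (hsub t ht)) (fun t ht => hu t (hsub t ht))
    have hzT1 : z (T+1) ∈ Set.Icc δ 1 := (hzmin T (by simp [Finset.mem_Icc]; omega)).1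
    have hzT2 := hzmin (T+1) (by simp [Finset.mem_Icc])
    have huT1 := hu (T+1) (by simp [Finset.mem_Icc])
    have huT : u T ∈ Set.Icc δ 1 := hu T (by simp [Finset.mem_Icc]; omega)
    have hstep := omd_step η δ hη hδ0 hδ1 (r (T+1)) (z (T+1)) (z (T+2)) (u (T+1))
      hzT1.1 hzT1.2 hzT2.1.1 hzT2.1.2 huT1.1 huT1.2
      (by simpa using hzT2.2)
    have hswitch : Dphi η (u (T+1)) (z (T+1)) ≤ Dphi η (u T) (z (T+1))
        + (if u (T+1) = u T then (0:ℝ) else 1) * (2/(η*δ)) := by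
      split_ifs with hcase
      · rw [hcase]; simp
      · have h1 : Dphi η (u (T+1)) (z (T+1)) ≤ 2/(η*δ) :=
          Dphi_le hη hδ0 huT1.1 huT1.2 hzT1.1 hzT1.2
        have h2 : 0 ≤ Dphi η (u T) (z (T+1)) :=
          Dphi_nonneg (δ := δ) hη (lt_of_lt_of_le hδ0 huT.1) (lt_of_lt_of_le hδ0 hzT1.1)
        linarith
    rw [Finset.sum_Icc_succ_top (by omega : 1 ≤ T+1),
       Finset.sum_Icc_succ_top (by omega : 1 ≤ T+1),
       Finset.sum_Icc_succ_top (by omega : 2 ≤ T+1)]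
    have hsimp : (T+1) - 1 = T := by omega
    rw [hsimp]
    have e1 : (T+1)+1 = T+2 := rfl
    rw [e1] at *
    nlinarith [ihh, hstep, hswitch]

/-- Lemma 2: local-norm switching-regret guarantee of the
one-dimensional OMD with the one-sided log-barrier.
For `z_1 = 1` and `z_{t+1} = argmin_{z ∈ [δ,1]} (-r_t z + D_φ(z, z_t))`:
for every sequence `u_1, …, u_T ∈ [δ,1]` with at most `S-1` switches,
`-Σ_t z_t r_t + Σ_t u_t r_t ≤ η Σ_t z_t r_t² + 2S/(ηδ)`. -/
theorem stmt_5 (η δ : ℝ) (hη : 0 < η) (hδ0 : 0 < δ) (hδ1 : δ ≤ 1)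
    (T : ℕ) (r : ℕ → ℝ) (z : ℕ → ℝ)
    (hz1 : z 1 = 1)
    -- z_{t+1} is the minimizer over [δ, 1] of  -r_t·z + D_φ(z, z_t)
    (hzmin : ∀ t ∈ Finset.Icc 1 T,
      z (t + 1) ∈ Set.Icc δ 1 ∧
      ∀ y ∈ Set.Icc δ 1,
        -(r t) * z (t + 1) + Dphi η (z (t + 1)) (z t) ≤ -(r t) * y + Dphi η y (z t))
    (S : ℕ) (hS : 1 ≤ S)
    (u : ℕ → ℝ)
    (hu : ∀ t ∈ Finset.Icc 1 T, u t ∈ Set.Icc δ 1)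
    (huswitch : (∑ t ∈ Finset.Icc 2 T, if u t = u (t - 1) then 0 else 1) ≤ S - 1) :
    -(∑ t ∈ Finset.Icc 1 T, z t * r t) + (∑ t ∈ Finset.Icc 1 T, u t * r t) ≤
      η * (∑ t ∈ Finset.Icc 1 T, z t * (r t) ^ 2) + 2 * (S : ℝ) / (η * δ) := by
  
  rcases Nat.lt_or_ge T 1 with hT | hT
  · interval_cases T
    simp only [Finset.Icc_self, show Finset.Icc 1 0 = (∅ : Finset ℕ) from rfl,
      Finset.sum_empty]
    have : (0:ℝ) ≤ 2 * (S:ℝ) / (η * δ) := by positivity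
    linarith
  · have h := omd_sum η δ hη hδ0 hδ1 r z u hz1 T hT hzmin hu
    -- LHS rewriting
    have e1 : (∑ t ∈ Finset.Icc 1 T, r t * (u t - z t)) =
        (∑ t ∈ Finset.Icc 1 T, u t * r t) - (∑ t ∈ Finset.Icc 1 T, z t * r t) := by
      rw [← Finset.sum_sub_distrib]
      exact Finset.sum_congr rfl (fun t _ => by ring)
    -- divergence nonneg
    have huT : u T ∈ Set.Icc δ 1 := hu T (by simp [Finset.mem_Icc]; omega)
    have hzT1 : z (T+1) ∈ Set.Icc δ 1 := (hzmin T (by simp [Finset.mem_Icc]; omega)).1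
    have hD : 0 ≤ Dphi η (u T) (z (T+1)) :=
      Dphi_nonneg (δ := δ) hη (lt_of_lt_of_le hδ0 huT.1) (lt_of_lt_of_le hδ0 hzT1.1)
    -- switch count
    have hW : (∑ t ∈ Finset.Icc 2 T, if u t = u (t-1) then (0:ℝ) else 1) ≤ (S:ℝ) - 1 := by
      have hc : (∑ t ∈ Finset.Icc 2 T, if u t = u (t-1) then (0:ℝ) else 1)
          = ((∑ t ∈ Finset.Icc 2 T, if u t = u (t-1) then (0:ℕ) else 1 : ℕ) : ℝ) := by
        push_cast
        exact Finset.sum_congr rfl (fun t _ => by split_ifs <;> simp)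
      rw [hc]
      have : ((∑ t ∈ Finset.Icc 2 T, if u t = u (t-1) then (0:ℕ) else 1 : ℕ) : ℝ)
          ≤ ((S - 1 : ℕ) : ℝ) := by exact_mod_cast huswitch
      rw [Nat.cast_sub hS] at this
      simpa using this
    have hB : (0:ℝ) ≤ 2/(η*δ) := by positivity
    have hmul := mul_le_mul_of_nonneg_right hW hB
    have e2 : (2:ℝ) * (S:ℝ) / (η * δ) = 2/(η*δ) + ((S:ℝ) - 1) * (2/(η*δ)) := by
      field_simp; ring
    rw [e1] at h
    linarith
end

section
/- Let η > 0, δ ∈ (0,1], L, ξ ∈ ℝ, and φ(z) = (1/η)·ln(1/z). Define z₁ = argmin_{z ∈ [δ,1]} (L·z + φ(z)) and z₂ = argmin_{z ∈ [δ,1]} ((L+ξ)·z + φ(z)). Then ξ·(z₁ − z₂) ≤ η·z₁·ξ². Equivalently (using the explicit solution z₁ = 1 if L ≤ 1/η, z₁ = 1/(ηL) if 1/η < L < 1/(ηδ), z₁ = δ if L ≥ 1/(ηδ), and similarly for z₂ with L replaced by L+ξ), the inequality holds in all nine resulting cases. -/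
/-- If `z` minimizes `M y + φ(y)` on `[δ,1]` and `z < 1`, then `1/(η z) ≤ M`. -/
lemma kkt_upper (η δ M z : ℝ) (hη : 0 < η) (hδ0 : 0 < δ)
    (hmem : z ∈ Set.Icc δ 1)
    (hmin : ∀ y ∈ Set.Icc δ 1, M * z + phi η z ≤ M * y + phi η y)
    (hlt : z < 1) : 1 / (η * z) ≤ M := by
  have hz0 : 0 < z := lt_of_lt_of_le hδ0 hmem.1
  have hlog : HasDerivAt Real.log z⁻¹ z := Real.hasDerivAt_log hz0.ne'
  have hslope : Filter.Tendsto (slope Real.log z) (nhdsWithin z (Set.Ioi z)) (nhds z⁻¹) :=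
    (hasDerivAt_iff_tendsto_slope.mp hlog).mono_left
      (nhdsWithin_mono _ (fun y hy => ne_of_gt hy))
  have htend : Filter.Tendsto (fun y => (1/η) * slope Real.log z y)
      (nhdsWithin z (Set.Ioi z)) (nhds ((1/η) * z⁻¹)) :=
    hslope.const_mul _
  have hev : ∀ᶠ y in nhdsWithin z (Set.Ioi z), (1/η) * slope Real.log z y ≤ M := by
    filter_upwards [Ioo_mem_nhdsGT_of_mem (Set.mem_Ico.mpr ⟨le_refl z, hlt⟩)] with y hy
    have hy1 : y ∈ Set.Icc δ 1 := ⟨le_of_lt (lt_of_le_of_lt hmem.1 hy.1), le_of_lt hy.2⟩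
    have h := hmin y hy1
    have hy0 : 0 < y := lt_trans hz0 hy.1
    have hdiff : 0 < y - z := sub_pos.mpr hy.1
    have hphi : phi η z - phi η y = (1/η) * (Real.log y - Real.log z) := by
      unfold phi
      rw [Real.log_div one_ne_zero hz0.ne', Real.log_div one_ne_zero hy0.ne']
      ring
    have h2 : (1/η) * (Real.log y - Real.log z) ≤ M * (y - z) := by linarith
    rw [slope_def_field,
      show (1/η) * ((Real.log y - Real.log z) / (y - z))
        = (1/η * (Real.log y - Real.log z)) / (y - z) from by ring,
      div_le_iff₀ hdiff]
    exact h2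
  have : (1/η) * z⁻¹ ≤ M := le_of_tendsto htend hev
  rw [one_div, mul_inv]
  rwa [one_div] at this

/-- If `z` minimizes `M y + φ(y)` on `[δ,1]` and `δ < z`, then `M ≤ 1/(η z)`. -/
lemma kkt_lower (η δ M z : ℝ) (hη : 0 < η) (hδ0 : 0 < δ)
    (hmem : z ∈ Set.Icc δ 1)
    (hmin : ∀ y ∈ Set.Icc δ 1, M * z + phi η z ≤ M * y + phi η y)
    (hgt : δ < z) : M ≤ 1 / (η * z) := by
  have hz0 : 0 < z := lt_of_lt_of_le hδ0 hmem.1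
  have hlog : HasDerivAt Real.log z⁻¹ z := Real.hasDerivAt_log hz0.ne'
  have hslope : Filter.Tendsto (slope Real.log z) (nhdsWithin z (Set.Iio z)) (nhds z⁻¹) :=
    (hasDerivAt_iff_tendsto_slope.mp hlog).mono_left
      (nhdsWithin_mono _ (fun y hy => ne_of_lt hy))
  have htend : Filter.Tendsto (fun y => (1/η) * slope Real.log z y)
      (nhdsWithin z (Set.Iio z)) (nhds ((1/η) * z⁻¹)) :=
    hslope.const_mul _
  have hev : ∀ᶠ y in nhdsWithin z (Set.Iio z), M ≤ (1/η) * slope Real.log z y := by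
    filter_upwards [Ioo_mem_nhdsLT_of_mem (Set.mem_Ioc.mpr ⟨hgt, le_refl z⟩)] with y hy
    have hy1 : y ∈ Set.Icc δ 1 := ⟨le_of_lt hy.1, le_of_lt (lt_of_lt_of_le hy.2 hmem.2)⟩
    have h := hmin y hy1
    have hy0 : 0 < y := lt_trans hδ0 hy.1
    have hdiff : 0 < z - y := sub_pos.mpr hy.2
    have hphi : phi η z - phi η y = (1/η) * (Real.log y - Real.log z) := by
      unfold phi
      rw [Real.log_div one_ne_zero hz0.ne', Real.log_div one_ne_zero hy0.ne']
      ring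
    have h2 : (1/η) * (Real.log y - Real.log z) ≤ M * (y - z) := by linarith
    have hneg : y - z < 0 := by linarith
    rw [slope_def_field,
      show (1/η) * ((Real.log y - Real.log z) / (y - z))
        = (1/η * (Real.log y - Real.log z)) / (y - z) from by ring,
      le_div_iff_of_neg hneg]
    exact h2
  have : M ≤ (1/η) * z⁻¹ := ge_of_tendsto htend hev
  rw [one_div, mul_inv]
  rwa [one_div] at this

/-- one-step stability inequality in the proof of Lemma 2.
If `z₁ = argmin_{z ∈ [δ,1]} (L z + φ(z))` and
`z₂ = argmin_{z ∈ [δ,1]} ((L + ξ) z + φ(z))`, then `ξ (z₁ - z₂) ≤ η z₁ ξ²`. -/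
theorem stmt_6 (η δ : ℝ) (hη : 0 < η) (hδ0 : 0 < δ) (hδ1 : δ ≤ 1)
    (L ξ : ℝ) (z₁ z₂ : ℝ)
    (hz₁mem : z₁ ∈ Set.Icc δ 1)
    (hz₁min : ∀ y ∈ Set.Icc δ 1, L * z₁ + phi η z₁ ≤ L * y + phi η y)
    (hz₂mem : z₂ ∈ Set.Icc δ 1)
    (hz₂min : ∀ y ∈ Set.Icc δ 1, (L + ξ) * z₂ + phi η z₂ ≤ (L + ξ) * y + phi η y) :
    ξ * (z₁ - z₂) ≤ η * z₁ * ξ ^ 2 := by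
  have hz₁0 : 0 < z₁ := lt_of_lt_of_le hδ0 hz₁mem.1
  have hz₂0 : 0 < z₂ := lt_of_lt_of_le hδ0 hz₂mem.1
  -- monotonicity: ξ * (z₁ - z₂) ≥ 0
  have h1 := hz₁min z₂ hz₂mem
  have h2 := hz₂min z₁ hz₁mem
  have hmono : ξ * z₂ ≤ ξ * z₁ := by nlinarith
  rcases lt_trichotomy ξ 0 with hξ | hξ | hξ
  · -- ξ < 0, so z₁ ≤ z₂
    have hle : z₁ ≤ z₂ := le_of_mul_le_mul_left (by linarith [hmono] : (-ξ) * z₁ ≤ (-ξ) * z₂) (by linarith)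
    rcases eq_or_lt_of_le hle with heq | hlt
    · rw [heq]; simp; positivity
    · have hz₁lt1 : z₁ < 1 := lt_of_lt_of_le hlt hz₂mem.2
      have hz₂gtδ : δ < z₂ := lt_of_le_of_lt hz₁mem.1 hlt
      have hA : 1 / (η * z₁) ≤ L := kkt_upper η δ L z₁ hη hδ0 hz₁mem hz₁min hz₁lt1
      have hB : L + ξ ≤ 1 / (η * z₂) := kkt_lower η δ (L + ξ) z₂ hη hδ0 hz₂mem hz₂min hz₂gtδ
      have hA' : 1 ≤ L * (η * z₁) := by
        rw [div_le_iff₀ (by positivity)] at hA; linarith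
      have hB' : (L + ξ) * (η * z₂) ≤ 1 := by
        rw [le_div_iff₀ (by positivity)] at hB; linarith
      -- z₂ ≤ (L*(η*z₁))*z₂ and (L+ξ)*η*z₂*z₁ ≤ z₁ ⇒ z₂ - z₁ ≤ -ξ*η*z₁*z₂ ≤ -ξ*η*z₁
      nlinarith [mul_le_mul_of_nonneg_left hA' (le_of_lt hz₂0),
                 mul_le_mul_of_nonneg_left hB' (le_of_lt hz₁0),
                 mul_pos hη hz₁0, hz₂mem.2, mul_pos (mul_pos hη hz₁0) hz₂0]
  · simp [hξ]
  · -- ξ > 0, so z₂ ≤ z₁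
    have hle : z₂ ≤ z₁ := le_of_mul_le_mul_left hmono hξ
    rcases eq_or_lt_of_le hle with heq | hlt
    · rw [← heq]; simp; positivity
    · have hz₂lt1 : z₂ < 1 := lt_of_lt_of_le hlt hz₁mem.2
      have hz₁gtδ : δ < z₁ := lt_of_le_of_lt hz₂mem.1 hlt
      have hA : 1 / (η * z₂) ≤ L + ξ := kkt_upper η δ (L + ξ) z₂ hη hδ0 hz₂mem hz₂min hz₂lt1
      have hB : L ≤ 1 / (η * z₁) := kkt_lower η δ L z₁ hη hδ0 hz₁mem hz₁min hz₁gtδ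
      have hA' : 1 ≤ (L + ξ) * (η * z₂) := by
        rw [div_le_iff₀ (by positivity)] at hA; linarith
      have hB' : L * (η * z₁) ≤ 1 := by
        rw [le_div_iff₀ (by positivity)] at hB; linarith
      nlinarith [mul_le_mul_of_nonneg_left hA' (le_of_lt hz₁0),
                 mul_le_mul_of_nonneg_left hB' (le_of_lt hz₂0),
                 mul_pos hη hz₁0, hz₂mem.2, mul_pos (mul_pos hη hz₁0) hz₂0]
end

section
/- Let η > 0, δ ∈ (0,1], and let φ(z) = (1/η)·ln(1/z) with Bregman divergence D_φ(z, z') = φ(z) − φ(z') − φ'(z')(z − z'). Let r_1,…,r_T ∈ ℝ be arbitrary, set z_1 = 1, and define z_{t+1} = argmin_{z ∈ [δ,1]} (−r_t·z + D_φ(z, z_t)). Then for every S ≥ 1 and every sequence u_1,…,u_T ∈ [δ,1] with Σ_{t=2}^T 1{u_t ≠ u_{t−1}} ≤ S − 1: −Σ_{t=1}^T z_{t+1}·r_t + Σ_{t=1}^T u_t·r_t ≤ 2S/(η δ). -/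
lemma Dphi_formula (η a b : ℝ) (hη : η ≠ 0) (ha : a ≠ 0) (hb : b ≠ 0) :
    Dphi η a b = (1/η) * ((a/b - 1) - Real.log (a/b)) := by
  unfold Dphi phi
  rw [Real.log_div ha hb, Real.log_div one_ne_zero ha, Real.log_div one_ne_zero hb,
    Real.log_one]
  field_simp
  ring

lemma three_point_s7 (η b v w : ℝ) :
    Dphi η v b - Dphi η w b - Dphi η v w = (v - w)/(η*b) - (v - w)/(η*w) := by
  unfold Dphi phi
  ring

lemma Dphi_nonneg_s7 (η a b : ℝ) (hη : 0 < η) (ha : 0 < a) (hb : 0 < b) :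
    0 ≤ Dphi η a b := by
  rw [Dphi_formula η a b hη.ne' ha.ne' hb.ne']
  have h := Real.log_le_sub_one_of_pos (div_pos ha hb)
  have : (0:ℝ) < 1/η := by positivity
  nlinarith

lemma Dphi_le_s7 (η δ a b : ℝ) (hη : 0 < η) (hδ0 : 0 < δ)
    (ha : a ∈ Set.Icc δ 1) (hb : b ∈ Set.Icc δ 1) : Dphi η a b ≤ 2/(η*δ) := by
  obtain ⟨ha1, ha2⟩ := ha
  obtain ⟨hb1, hb2⟩ := hb
  have ha0 : 0 < a := lt_of_lt_of_le hδ0 ha1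
  have hb0 : 0 < b := lt_of_lt_of_le hδ0 hb1
  rw [Dphi_formula η a b hη.ne' ha0.ne' hb0.ne']
  have h1 : a/b ≤ 1/δ := by
    rw [div_le_div_iff₀ hb0 hδ0]; nlinarith
  have h2 : b/a ≤ 1/δ := by
    rw [div_le_div_iff₀ ha0 hδ0]; nlinarith
  have h3 : Real.log (b/a) ≤ b/a - 1 := Real.log_le_sub_one_of_pos (div_pos hb0 ha0)
  have h4 : Real.log (b/a) = - Real.log (a/b) := by
    rw [← Real.log_inv]; congr 1; field_simp
  have hX : (a/b - 1) - Real.log (a/b) ≤ 2/δ := by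
    have hδ' : (1:ℝ) ≤ 1/δ := by
      rw [le_div_iff₀ hδ0]; linarith [ha2, ha1]
    have : 2/δ = 1/δ + 1/δ := by ring
    rw [this]; nlinarith
  have hfin : (1/η) * ((a/b - 1) - Real.log (a/b)) ≤ (1/η) * (2/δ) := by
    apply mul_le_mul_of_nonneg_left hX (by positivity)
  calc (1/η) * ((a/b - 1) - Real.log (a/b)) ≤ (1/η) * (2/δ) := hfin
    _ = 2/(η*δ) := by field_simp

lemma Dphi_upper (η v w : ℝ) (hη : 0 < η) (hv : 0 < v) (hw : 0 < w) :
    Dphi η v w ≤ (v - w)^2 / (η * w * v) := by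
  rw [Dphi_formula η v w hη.ne' hv.ne' hw.ne']
  have hlog : Real.log (w/v) ≤ w/v - 1 := Real.log_le_sub_one_of_pos (div_pos hw hv)
  have hwv : Real.log (w/v) = - Real.log (v/w) := by
    rw [← Real.log_inv]; congr 1; field_simp
  have hvne := hv.ne'
  have hwne := hw.ne'
  have heq : v/w - 1 + (w/v - 1) = (v - w)^2 / (w * v) := by field_simp; ring
  have hXle : (v/w - 1) - Real.log (v/w) ≤ (v - w)^2 / (w * v) := by linarith
  calc (1/η) * ((v/w - 1) - Real.log (v/w)) ≤ (1/η) * ((v - w)^2 / (w * v)) :=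
        mul_le_mul_of_nonneg_left hXle (by positivity)
    _ = (v - w)^2 / (η * w * v) := by ring

lemma eps_lemma (A K : ℝ) (hK : 0 < K)
    (h : ∀ ε : ℝ, 0 < ε → ε ≤ 1 → ε * A ≤ ε^2 * K) : A ≤ 0 := by
  by_contra hA
  push_neg at hA
  have hε0 : 0 < min 1 (A/(2*K)) := lt_min one_pos (by positivity)
  have h1 := h _ hε0 (min_le_left _ _)
  have h3 : min 1 (A/(2*K)) * (2*K) ≤ A := by
    have h2 : min 1 (A/(2*K)) ≤ A/(2*K) := min_le_right _ _
    calc min 1 (A/(2*K)) * (2*K) ≤ (A/(2*K)) * (2*K) := by nlinarith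
      _ = A := by field_simp
  nlinarith [mul_le_mul_of_nonneg_right h3 hε0.le, h1, mul_pos hε0 hA]

lemma key (η δ : ℝ) (hη : 0 < η) (hδ0 : 0 < δ) (r b w : ℝ)
    (hb : 0 < b) (hw : w ∈ Set.Icc δ 1)
    (hopt : ∀ y ∈ Set.Icc δ 1, -r * w + Dphi η w b ≤ -r * y + Dphi η y b)
    (u : ℝ) (hu : u ∈ Set.Icc δ 1) :
    r * (u - w) ≤ Dphi η u b - Dphi η u w := by
  have hw0 : 0 < w := lt_of_lt_of_le hδ0 hw.1
  have hu0 : 0 < u := lt_of_lt_of_le hδ0 hu.1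
  have hηne := hη.ne'
  have hbne := hb.ne'
  have hwne := hw0.ne'
  obtain ⟨c, hc⟩ : ∃ c : ℝ, c = r - 1/(η*b) + 1/(η*w) := ⟨_, rfl⟩
  -- Step 1
  have step1 : ∀ v ∈ Set.Icc δ 1, c * (v - w) ≤ Dphi η v w := by
    intro v hv
    have h := hopt v hv
    have h3 := three_point_s7 η b v w
    have hcexp : c * (v - w) = (r*v - r*w) - (v - w)/(η*b) + (v - w)/(η*w) := by
      rw [hc]; ring
    have h' : r*v - r*w ≤ Dphi η v b - Dphi η w b := by nlinarith [h]
    linarith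
  -- Step 2 : c * (u - w) ≤ 0
  have step2 : c * (u - w) ≤ 0 := by
    apply eps_lemma _ ((u - w)^2/(η*δ^2) + 1) (by positivity)
    intro ε hε0 hε1
    have hmem : w + ε*(u - w) ∈ Set.Icc δ 1 := by
      obtain ⟨hu1, hu2⟩ := hu
      obtain ⟨hw1, hw2⟩ := hw
      constructor
      · nlinarith [mul_nonneg (by linarith : (0:ℝ) ≤ 1 - ε) (by linarith : 0 ≤ w - δ),
          mul_nonneg hε0.le (by linarith : 0 ≤ u - δ)]
      · nlinarith [mul_nonneg (by linarith : (0:ℝ) ≤ 1 - ε) (by linarith : 0 ≤ 1 - w),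
          mul_nonneg hε0.le (by linarith : 0 ≤ 1 - u)]
    have hv0 : 0 < w + ε*(u - w) := lt_of_lt_of_le hδ0 hmem.1
    have h1 := step1 _ hmem
    have hDb := Dphi_upper η (w + ε*(u - w)) w hη hv0 hw0
    rw [show (w + ε*(u - w)) - w = ε*(u - w) from by ring] at hDb
    have hrec : c * (w + ε*(u - w) - w) = ε * (c * (u - w)) := by ring
    have hden : η * δ^2 ≤ η * w * (w + ε*(u - w)) := by
      have : δ * δ ≤ w * (w + ε*(u - w)) :=
        mul_le_mul hw.1 hmem.1 hδ0.le (le_trans hδ0.le hw.1)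
      nlinarith
    have hstep : (ε*(u - w))^2 / (η * w * (w + ε*(u - w))) ≤ (ε*(u - w))^2 / (η*δ^2) := by
      gcongr
    have heq2 : (ε*(u - w))^2 / (η*δ^2) = ε^2 * ((u - w)^2/(η*δ^2)) := by ring
    have hfin : ε^2 * ((u - w)^2/(η*δ^2)) ≤ ε^2 * ((u - w)^2/(η*δ^2) + 1) := by
      nlinarith [sq_nonneg ε]
    linarith
  -- conclude
  have h3 := three_point_s7 η b u w
  have hnn := Dphi_nonneg_s7 η w b hη hw0 hb
  have hcexp : c * (u - w) = r * (u - w) - (u - w)/(η*b) + (u - w)/(η*w) := by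
    rw [hc]; ring
  linarith

lemma tele (a b : ℕ → ℝ) (w : ℕ → ℝ) (C : ℝ) (hC : 0 ≤ C) :
    ∀ T : ℕ, 1 ≤ T → a 1 ≤ C → (∀ t ∈ Finset.Icc 1 T, 0 ≤ b t) →
    (∀ t ∈ Finset.Icc 2 T, a t - b (t-1) ≤ if w t = w (t-1) then 0 else C) →
    ∑ t ∈ Finset.Icc 1 T, (a t - b t) ≤
      C * (1 + ∑ t ∈ Finset.Icc 2 T, (if w t = w (t-1) then (0:ℝ) else 1)) - b T := by
  intro T hT
  induction T, hT using Nat.le_induction with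
  | base =>
    intro h1 hb hab
    simp only [Finset.Icc_self, Finset.sum_singleton]
    rw [show Finset.Icc 2 1 = ∅ from rfl]
    simp only [Finset.sum_empty]
    linarith
  | succ T hT IH =>
    intro h1 hb hab
    have hsub1 : ∀ t ∈ Finset.Icc 1 T, 0 ≤ b t := by
      intro t ht; exact hb t (Finset.Icc_subset_Icc_right (by omega) ht)
    have hsub2 : ∀ t ∈ Finset.Icc 2 T, a t - b (t-1) ≤ if w t = w (t-1) then 0 else C := by
      intro t ht; exact hab t (Finset.Icc_subset_Icc_right (by omega) ht)
    have IH' := IH h1 hsub1 hsub2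
    rw [Finset.sum_Icc_succ_top (by omega : 1 ≤ T + 1),
        Finset.sum_Icc_succ_top (by omega : 2 ≤ T + 1)]
    have hlast := hab (T+1) (by simp; omega)
    have hTsub : T + 1 - 1 = T := by omega
    rw [hTsub] at hlast
    have hif : (if w (T+1) = w (T+1-1) then (0:ℝ) else C)
        = C * (if w (T+1) = w (T+1-1) then (0:ℝ) else 1) := by
      split_ifs <;> ring
    rw [hTsub] at hif
    rw [hTsub]
    split_ifs at hlast hif ⊢ with hcase
    · linarith
    · linarith

/-- intermediate bound in the proof of Lemma 2.
For the one-dimensional OMD update `z_{t+1} = argmin_{z ∈ [δ,1]} (-r_t z + D_φ(z, z_t))`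
with `z_1 = 1`: for every competitor sequence `u_1, …, u_T ∈ [δ,1]` with at most `S-1`
switches, `-Σ_t z_{t+1} r_t + Σ_t u_t r_t ≤ 2S/(ηδ)`. -/
theorem stmt_7 (η δ : ℝ) (hη : 0 < η) (hδ0 : 0 < δ) (hδ1 : δ ≤ 1)
    (T : ℕ) (r : ℕ → ℝ) (z : ℕ → ℝ)
    (hz1 : z 1 = 1)
    (hzmin : ∀ t ∈ Finset.Icc 1 T,
      z (t + 1) ∈ Set.Icc δ 1 ∧
      ∀ y ∈ Set.Icc δ 1,
        -(r t) * z (t + 1) + Dphi η (z (t + 1)) (z t) ≤ -(r t) * y + Dphi η y (z t))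
    (S : ℕ) (hS : 1 ≤ S)
    (u : ℕ → ℝ)
    (hu : ∀ t ∈ Finset.Icc 1 T, u t ∈ Set.Icc δ 1)
    (huswitch : (∑ t ∈ Finset.Icc 2 T, if u t = u (t - 1) then 0 else 1) ≤ S - 1) :
    -(∑ t ∈ Finset.Icc 1 T, z (t + 1) * r t) + (∑ t ∈ Finset.Icc 1 T, u t * r t) ≤
      2 * (S : ℝ) / (η * δ) := by
  rcases Nat.eq_zero_or_pos T with hT0 | hT1
  · subst hT0
    rw [show Finset.Icc 1 0 = (∅ : Finset ℕ) from rfl]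
    simp only [Finset.sum_empty, neg_zero, add_zero]
    positivity
  · have hzmem : ∀ t ∈ Finset.Icc 1 T, z t ∈ Set.Icc δ 1 := by
      intro t ht
      simp only [Finset.mem_Icc] at ht
      rcases Nat.lt_or_ge t 2 with h2 | h2
      · have ht1 : t = 1 := by omega
        subst ht1; rw [hz1]; exact ⟨hδ1, le_refl 1⟩
      · have hmem : t - 1 ∈ Finset.Icc 1 T := by simp only [Finset.mem_Icc]; omega
        have := (hzmin (t-1) hmem).1
        rwa [Nat.sub_add_cancel (by omega)] at this
    have hztpos : ∀ t ∈ Finset.Icc 1 T, 0 < z t :=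
      fun t ht => lt_of_lt_of_le hδ0 (hzmem t ht).1
    have hT1mem : (1:ℕ) ∈ Finset.Icc 1 T := by simp only [Finset.mem_Icc]; omega
    have hTTmem : T ∈ Finset.Icc 1 T := by simp only [Finset.mem_Icc]; omega
    -- per-step inequality
    have hstep : ∀ t ∈ Finset.Icc 1 T,
        u t * r t - z (t+1) * r t ≤ Dphi η (u t) (z t) - Dphi η (u t) (z (t+1)) := by
      intro t ht
      have hk := key η δ hη hδ0 (r t) (z t) (z (t+1)) (hztpos t ht) ((hzmin t ht).1)
        (hzmin t ht).2 (u t) (hu t ht)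
      have heq : u t * r t - z (t+1) * r t = r t * (u t - z (t+1)) := by ring
      linarith
    -- telescoping
    have htele : ∑ t ∈ Finset.Icc 1 T, (Dphi η (u t) (z t) - Dphi η (u t) (z (t+1))) ≤
        (2/(η*δ)) * (1 + ∑ t ∈ Finset.Icc 2 T, (if u t = u (t-1) then (0:ℝ) else 1))
          - Dphi η (u T) (z (T+1)) := by
      refine tele (fun t => Dphi η (u t) (z t)) (fun t => Dphi η (u t) (z (t+1))) u
        (2/(η*δ)) (by positivity) T hT1 ?_ ?_ ?_
      · exact Dphi_le_s7 η δ (u 1) (z 1) hη hδ0 (hu 1 hT1mem) (hzmem 1 hT1mem)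
      · intro t ht
        exact Dphi_nonneg_s7 η (u t) (z (t+1)) hη (lt_of_lt_of_le hδ0 (hu t ht).1)
          (lt_of_lt_of_le hδ0 ((hzmin t ht).1).1)
      · intro t ht
        simp only [Finset.mem_Icc] at ht
        have htmem : t ∈ Finset.Icc 1 T := by simp only [Finset.mem_Icc]; omega
        have ht1mem : t - 1 ∈ Finset.Icc 1 T := by simp only [Finset.mem_Icc]; omega
        have hz' : z (t - 1 + 1) = z t := by congr 1; omega
        simp only [hz']
        split_ifs with hcase
        · rw [hcase]; simp
        · have hA := Dphi_le_s7 η δ (u t) (z t) hη hδ0 (hu t htmem) (hzmem t htmem)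
          have hB := Dphi_nonneg_s7 η (u (t-1)) (z t) hη
            (lt_of_lt_of_le hδ0 (hu (t-1) ht1mem).1) (hztpos t htmem)
          linarith
    have hbT : 0 ≤ Dphi η (u T) (z (T+1)) :=
      Dphi_nonneg_s7 η (u T) (z (T+1)) hη (lt_of_lt_of_le hδ0 (hu T hTTmem).1)
        (lt_of_lt_of_le hδ0 ((hzmin T hTTmem).1).1)
    -- cast of the switch count
    have hcast : (∑ t ∈ Finset.Icc 2 T, (if u t = u (t-1) then (0:ℝ) else 1))
        = ((∑ t ∈ Finset.Icc 2 T, (if u t = u (t-1) then 0 else 1) : ℕ) : ℝ) := by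
      push_cast
      rfl
    have hSle : (1:ℝ) + (∑ t ∈ Finset.Icc 2 T, (if u t = u (t-1) then (0:ℝ) else 1)) ≤ S := by
      rw [hcast]
      have h' : ((∑ t ∈ Finset.Icc 2 T, (if u t = u (t-1) then 0 else 1) : ℕ) : ℝ)
          ≤ ((S - 1 : ℕ) : ℝ) := Nat.cast_le.mpr huswitch
      rw [Nat.cast_sub hS, Nat.cast_one] at h'
      linarith
    have hmul : (2/(η*δ)) * (1 + ∑ t ∈ Finset.Icc 2 T, (if u t = u (t-1) then (0:ℝ) else 1))
        ≤ (2/(η*δ)) * (S : ℝ) := by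
      apply mul_le_mul_of_nonneg_left hSle (by positivity)
    have hCS : (2/(η*δ)) * (S:ℝ) = 2 * (S:ℝ) / (η*δ) := by ring
    have hsum : -(∑ t ∈ Finset.Icc 1 T, z (t + 1) * r t) + (∑ t ∈ Finset.Icc 1 T, u t * r t)
        = ∑ t ∈ Finset.Icc 1 T, (u t * r t - z (t+1) * r t) := by
      rw [Finset.sum_sub_distrib]; ring
    have hsum2 : ∑ t ∈ Finset.Icc 1 T, (u t * r t - z (t+1) * r t)
        ≤ ∑ t ∈ Finset.Icc 1 T, (Dphi η (u t) (z t) - Dphi η (u t) (z (t+1))) :=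
      Finset.sum_le_sum hstep
    linarith
end

section
/- Let K ≥ 2, T ≥ 2, η ∈ (0,1/5], γ ∈ (0,1/2], and ℓ_1,…,ℓ_T ∈ [−1,1]^K. Define the Mixing-Past-Posteriors iterates: p̃_1 = p_1 is the uniform distribution on [K]; for t ≥ 2, p_t = (1−γ)p̃_t + (γ/(t−1))Σ_{τ=1}^{t−1} p̃_τ; r_t(i) = ⟨p_t, ℓ_t⟩ − ℓ_t(i); and p̃_{t+1}(i) is proportional to p_t(i)·exp(η r_t(i)). Then for every benchmark sequence i_1,…,i_T ∈ [K] with at most S−1 switches and at most n distinct actions, Σ_{t=1}^T r_t(i_t) ≤ (n ln K + T·ln(1/(1−γ)) + S·ln(T/γ))/η + η Σ_{t=1}^T Σ_{i=1}^K p_t(i)·r_t(i)². -/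
lemma exp_le_sq_aux {x : ℝ} (hx : |x| ≤ 1) : Real.exp x ≤ 1 + x + x ^ 2 := by
  have h := Real.exp_bound hx (n := 2) (by norm_num)
  have hs : ∑ m ∈ Finset.range 2, x ^ m / (m.factorial : ℝ) = 1 + x := by
    simp [Finset.sum_range_succ]
  rw [hs] at h
  have h2 : |x| ^ 2 * ((2:ℕ).succ / ((2:ℕ).factorial * (2:ℕ) : ℝ)) = x ^ 2 * (3/4) := by
    rw [sq_abs]; norm_num
  rw [h2] at h
  have := abs_le.mp h
  nlinarith [sq_nonneg x]

/-- adaptive switching-regret bound for Mixing Past Posteriors,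
intermediate inequality in the proof of Theorem 5.
For the Mixing-Past-Posteriors iterates `p_t = (1-γ) p̃_t + (γ/(t-1)) Σ_{τ<t} p̃_τ`
with exponential-weight posteriors `p̃_{t+1}(i) ∝ p_t(i) exp(η r_t(i))`:
for any benchmark sequence with at most `S-1` switches and at most `n` distinct
actions,
`Σ_t r_t(i_t) ≤ (n ln K + T ln(1/(1-γ)) + S ln(T/γ))/η + η Σ_t Σ_i p_t(i) r_t(i)²`. -/
theorem stmt_8 (K T : ℕ) (hK : 2 ≤ K) (hT : 2 ≤ T)
    (η : ℝ) (hη0 : 0 < η) (hη : η ≤ 1 / 5)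
    (γ : ℝ) (hγ0 : 0 < γ) (hγ : γ ≤ 1 / 2)
    (ℓ : ℕ → Fin K → ℝ)
    (hℓ : ∀ t ∈ Finset.Icc 1 T, ∀ i, |ℓ t i| ≤ 1)
    (pt p r : ℕ → Fin K → ℝ)
    -- p̃_1 = p_1 uniform
    (hpt1 : ∀ i, pt 1 i = 1 / (K : ℝ))
    (hp1 : ∀ i, p 1 i = pt 1 i)
    -- mixing step for t ≥ 2
    (hp : ∀ t ∈ Finset.Icc 2 T, ∀ i,
      p t i = (1 - γ) * pt t i +
        (γ / ((t : ℝ) - 1)) * ∑ τ ∈ Finset.Icc 1 (t - 1), pt τ i)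
    -- instantaneous regret
    (hr : ∀ t ∈ Finset.Icc 1 T, ∀ i, r t i = (∑ j, p t j * ℓ t j) - ℓ t i)
    -- exponential-weights posterior update
    (hpt : ∀ t ∈ Finset.Icc 1 T, ∀ i,
      pt (t + 1) i =
        p t i * Real.exp (η * r t i) / ∑ j, p t j * Real.exp (η * r t j)) :
    ∀ S n : ℕ, 1 ≤ S →
    ∀ idx : ℕ → Fin K,
      (∑ t ∈ Finset.Icc 2 T, if idx t = idx (t - 1) then 0 else 1) ≤ S - 1 →
      ((Finset.Icc 1 T).image idx).card ≤ n →
      (∑ t ∈ Finset.Icc 1 T, r t (idx t)) ≤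
        ((n : ℝ) * Real.log K + (T : ℝ) * Real.log (1 / (1 - γ)) +
            (S : ℝ) * Real.log ((T : ℝ) / γ)) / η +
          η * ∑ t ∈ Finset.Icc 1 T, ∑ i, p t i * (r t i) ^ 2 := by
  haveI : Nonempty (Fin K) := ⟨⟨0, by omega⟩⟩
  have hKpos : (0:ℝ) < K := by positivity
  have hK1 : (1:ℝ) ≤ K := by exact_mod_cast (by omega : 1 ≤ K)
  have hγ1 : (0:ℝ) < 1 - γ := by linarith
  have hTpos : (0:ℝ) < T := by positivity
  have hT2 : (2:ℝ) ≤ (T:ℝ) := by exact_mod_cast hT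
  -- one mixing step preserves positivity and normalization
  have pstep : ∀ u, 1 ≤ u → u ≤ T →
      (∀ s, 1 ≤ s → s ≤ u → (∀ i, 0 < pt s i) ∧ (∑ i, pt s i) = 1) →
      (∀ i, 0 < p u i) ∧ (∑ i, p u i) = 1 := by
    intro u h1 h2 ih
    rcases eq_or_lt_of_le h1 with he | hlt
    · subst he
      constructor
      · intro i; rw [hp1 i, hpt1 i]; positivity
      · simp only [hp1, hpt1, Finset.sum_const, Finset.card_univ, Fintype.card_fin, nsmul_eq_mul]
        field_simp
    · have hu2 : 2 ≤ u := hlt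
      have hmem : u ∈ Finset.Icc 2 T := Finset.mem_Icc.mpr ⟨hu2, h2⟩
      have hucast : (2:ℝ) ≤ (u:ℝ) := by exact_mod_cast hu2
      have hu1pos : (0:ℝ) < (u:ℝ) - 1 := by linarith
      have hsumpos : ∀ i, 0 ≤ ∑ τ ∈ Finset.Icc 1 (u-1), pt τ i := by
        intro i
        refine Finset.sum_nonneg fun τ hτ => ?_
        rw [Finset.mem_Icc] at hτ
        exact le_of_lt ((ih τ hτ.1 (by omega)).1 i)
      constructor
      · intro i
        rw [hp u hmem i]
        have t1 : 0 < (1-γ) * pt u i := mul_pos hγ1 ((ih u h1 le_rfl).1 i)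
        have t2 : 0 ≤ (γ / ((u:ℝ)-1)) * ∑ τ ∈ Finset.Icc 1 (u-1), pt τ i :=
          mul_nonneg (by positivity) (hsumpos i)
        linarith
      · rw [Finset.sum_congr rfl fun i _ => hp u hmem i, Finset.sum_add_distrib,
          ← Finset.mul_sum, ← Finset.mul_sum, (ih u h1 le_rfl).2, Finset.sum_comm]
        have hinner : ∑ τ ∈ Finset.Icc 1 (u-1), ∑ i, pt τ i = ((u:ℕ) - 1 : ℕ) := by
          rw [Finset.sum_congr rfl fun τ hτ => (ih τ (Finset.mem_Icc.mp hτ).1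
            (by have := (Finset.mem_Icc.mp hτ).2; omega)).2]
          simp [Nat.card_Icc]
        rw [hinner]
        have h1u : (((u:ℕ) - 1 : ℕ):ℝ) = (u:ℝ) - 1 := by
          push_cast [Nat.cast_sub h1]; ring
        rw [h1u]
        field_simp
        ring
  -- full posterior facts
  have hptall : ∀ t, 1 ≤ t → t ≤ T + 1 → (∀ i, 0 < pt t i) ∧ (∑ i, pt t i) = 1 := by
    intro t
    induction t using Nat.strong_induction_on with
    | _ t ihs =>
      intro h1 h2
      rcases eq_or_lt_of_le h1 with he | hlt
      · subst he
        refine ⟨fun i => by rw [hpt1 i]; positivity, ?_⟩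
        simp only [hpt1, Finset.sum_const, Finset.card_univ, Fintype.card_fin, nsmul_eq_mul]
        field_simp
      · obtain ⟨u, rfl⟩ : ∃ u, t = u + 1 := ⟨t - 1, by omega⟩
        have hu1 : 1 ≤ u := by omega
        have huT : u ≤ T := by omega
        have humem : u ∈ Finset.Icc 1 T := Finset.mem_Icc.mpr ⟨hu1, huT⟩
        have hpu := pstep u hu1 huT (fun s hs1 hs2 => ihs s (by omega) hs1 (by omega))
        have hZ : 0 < ∑ j, p u j * Real.exp (η * r u j) :=
          Finset.sum_pos (fun j _ => mul_pos (hpu.1 j) (Real.exp_pos _)) Finset.univ_nonempty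
        constructor
        · intro i
          rw [hpt u humem i]
          exact div_pos (mul_pos (hpu.1 i) (Real.exp_pos _)) hZ
        · rw [Finset.sum_congr rfl fun i _ => hpt u humem i, ← Finset.sum_div,
            div_self hZ.ne']
  have hpall : ∀ t, 1 ≤ t → t ≤ T → (∀ i, 0 < p t i) ∧ (∑ i, p t i) = 1 :=
    fun t h1 h2 => pstep t h1 h2 (fun s hs1 hs2 => hptall s hs1 (by omega))
  have hptle : ∀ t, 1 ≤ t → t ≤ T + 1 → ∀ i, pt t i ≤ 1 := by
    intro t h1 h2 i
    have h := hptall t h1 h2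
    calc pt t i ≤ ∑ j, pt t j :=
          Finset.single_le_sum (fun j _ => (h.1 j).le) (Finset.mem_univ i)
      _ = 1 := h.2

  -- regret is bounded by 2 and has zero mean under p t
  have hrb : ∀ t ∈ Finset.Icc 1 T, ∀ i, |r t i| ≤ 2 := by
    intro t ht i
    have h12 := Finset.mem_Icc.mp ht
    have hpt' := hpall t h12.1 h12.2
    have hup : ∑ j, p t j * ℓ t j ≤ 1 := by
      calc ∑ j, p t j * ℓ t j ≤ ∑ j, p t j * 1 :=
            Finset.sum_le_sum fun j _ => mul_le_mul_of_nonneg_left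
              ((abs_le.mp (hℓ t ht j)).2) (hpt'.1 j).le
        _ = 1 := by simpa using hpt'.2
    have hlo : (-1:ℝ) ≤ ∑ j, p t j * ℓ t j := by
      calc (-1:ℝ) = ∑ j, p t j * (-1) := by simp [← Finset.sum_mul, hpt'.2]
        _ ≤ ∑ j, p t j * ℓ t j :=
            Finset.sum_le_sum fun j _ => mul_le_mul_of_nonneg_left
              ((abs_le.mp (hℓ t ht j)).1) (hpt'.1 j).le
    have := abs_le.mp (hℓ t ht i)
    rw [hr t ht i, abs_le]
    constructor <;> linarith
  have hmean : ∀ t ∈ Finset.Icc 1 T, ∑ i, p t i * r t i = 0 := by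
    intro t ht
    have h12 := Finset.mem_Icc.mp ht
    have hpt' := hpall t h12.1 h12.2
    rw [Finset.sum_congr rfl fun i _ => by rw [hr t ht i]]
    simp only [mul_sub]
    rw [Finset.sum_sub_distrib, ← Finset.sum_mul, hpt'.2, one_mul, sub_self]
  -- the per-round inequality
  have hround : ∀ t ∈ Finset.Icc 1 T, ∀ i,
      η * r t i ≤ Real.log (pt (t+1) i) - Real.log (p t i)
        + η^2 * ∑ j, p t j * (r t j)^2 := by
    intro t ht i
    have h12 := Finset.mem_Icc.mp ht
    have hpt' := hpall t h12.1 h12.2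
    have hZ : 0 < ∑ j, p t j * Real.exp (η * r t j) :=
      Finset.sum_pos (fun j _ => mul_pos (hpt'.1 j) (Real.exp_pos _)) Finset.univ_nonempty
    have hZle : (∑ j, p t j * Real.exp (η * r t j)) ≤ 1 + η^2 * ∑ j, p t j * (r t j)^2 := by
      have step1 : (∑ j, p t j * Real.exp (η * r t j)) ≤
          ∑ j, (p t j + η * (p t j * r t j) + η^2 * (p t j * (r t j)^2)) := by
        refine Finset.sum_le_sum fun j _ => ?_
        have hx : |η * r t j| ≤ 1 := by
          rw [abs_mul, abs_of_pos hη0]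
          have := hrb t ht j
          nlinarith
        have := exp_le_sq_aux hx
        have hb : p t j * Real.exp (η * r t j) ≤
            p t j * (1 + η * r t j + (η * r t j)^2) :=
          mul_le_mul_of_nonneg_left this (hpt'.1 j).le
        calc p t j * Real.exp (η * r t j)
            ≤ p t j * (1 + η * r t j + (η * r t j)^2) := hb
          _ = p t j + η * (p t j * r t j) + η^2 * (p t j * (r t j)^2) := by ring
      rw [Finset.sum_add_distrib, Finset.sum_add_distrib, ← Finset.mul_sum, ← Finset.mul_sum,
        hpt'.2, hmean t ht] at step1
      linarith
    have hlogZ : Real.log (∑ j, p t j * Real.exp (η * r t j)) ≤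
        η^2 * ∑ j, p t j * (r t j)^2 := by
      rw [Real.log_le_iff_le_exp hZ]
      exact le_trans hZle (by linarith [Real.add_one_le_exp (η^2 * ∑ j, p t j * (r t j)^2)])
    have hid : Real.log (pt (t+1) i) =
        Real.log (p t i) + η * r t i - Real.log (∑ j, p t j * Real.exp (η * r t j)) := by
      rw [hpt t ht i, Real.log_div (mul_pos (hpt'.1 i) (Real.exp_pos _)).ne' hZ.ne',
        Real.log_mul (hpt'.1 i).ne' (Real.exp_pos _).ne', Real.log_exp]
    linarith [hid, hlogZ]
  -- link 1: non-switch mixing bound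
  have hlink1 : ∀ t ∈ Finset.Icc 2 T, ∀ i,
      Real.log (pt t i) ≤ Real.log (p t i) + Real.log (1/(1-γ)) := by
    intro t ht i
    have h12 := Finset.mem_Icc.mp ht
    have hptpos := (hptall t (by omega) (by omega)).1 i
    have hppos := (hpall t (by omega) h12.2).1 i
    have hge : (1-γ) * pt t i ≤ p t i := by
      rw [hp t ht i]
      have : 0 ≤ (γ / ((t:ℝ)-1)) * ∑ τ ∈ Finset.Icc 1 (t-1), pt τ i := by
        refine mul_nonneg ?_ (Finset.sum_nonneg fun τ hτ => ?_)
        · have h2t : (2:ℝ) ≤ (t:ℝ) := by exact_mod_cast h12.1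
          exact div_nonneg hγ0.le (by linarith)
        · have hτ' := Finset.mem_Icc.mp hτ
          exact ((hptall τ hτ'.1 (by omega)).1 i).le
      linarith
    have hlog := Real.log_le_log (mul_pos hγ1 hptpos) hge
    rw [Real.log_mul hγ1.ne' hptpos.ne'] at hlog
    rw [one_div, Real.log_inv]
    linarith
  -- link 2: switching mixing bound
  have hlink2 : ∀ t ∈ Finset.Icc 2 T, ∀ τ, 1 ≤ τ → τ ≤ t - 1 → ∀ i,
      Real.log (pt τ i) ≤ Real.log (p t i) + Real.log ((T:ℝ)/γ) := by
    intro t ht τ hτ1 hτ2 i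
    have h12 := Finset.mem_Icc.mp ht
    have hptpos := (hptall τ hτ1 (by omega)).1 i
    have hppos := (hpall t (by omega) h12.2).1 i
    have ht1 : (0:ℝ) < (t:ℝ) - 1 := by
      have : (2:ℝ) ≤ (t:ℝ) := by exact_mod_cast h12.1
      linarith
    have hge : (γ/(T:ℝ)) * pt τ i ≤ p t i := by
      rw [hp t ht i]
      have hsum : pt τ i ≤ ∑ σ ∈ Finset.Icc 1 (t-1), pt σ i := by
        refine Finset.single_le_sum (f := fun σ => pt σ i) (fun σ hσ => ?_) (Finset.mem_Icc.mpr ⟨hτ1, hτ2⟩)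
        have hσ' := Finset.mem_Icc.mp hσ
        exact ((hptall σ hσ'.1 (by omega)).1 i).le
      have hdiv : γ/(T:ℝ) ≤ γ/((t:ℝ)-1) := by
        apply div_le_div_of_nonneg_left hγ0.le ht1
        have : (t:ℝ) ≤ (T:ℝ) := by exact_mod_cast h12.2
        linarith
      have h1 : (γ/(T:ℝ)) * pt τ i ≤ (γ/((t:ℝ)-1)) * pt τ i :=
        mul_le_mul_of_nonneg_right hdiv hptpos.le
      have h2 : (γ/((t:ℝ)-1)) * pt τ i ≤ (γ/((t:ℝ)-1)) * ∑ σ ∈ Finset.Icc 1 (t-1), pt σ i :=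
        mul_le_mul_of_nonneg_left hsum (div_nonneg hγ0.le ht1.le)
      have h3 : 0 ≤ (1-γ) * pt t i :=
        mul_nonneg hγ1.le ((hptall t (by omega) (by omega)).1 i).le
      linarith
    have hγT : (0:ℝ) < γ/(T:ℝ) := by positivity
    have hlog := Real.log_le_log (mul_pos hγT hptpos) hge
    rw [Real.log_mul hγT.ne' hptpos.ne', Real.log_div hγ0.ne' hTpos.ne'] at hlog
    rw [Real.log_div hTpos.ne' hγ0.ne']
    linarith
  intro S n hS idx hswN hcard
  classical
  set c1 := Real.log (1/(1-γ)) with hc1def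
  set c2 := Real.log ((T:ℝ)/γ) with hc2def
  set cK := Real.log (K:ℝ) with hcKdef
  set V := ∑ t ∈ Finset.Icc 1 T, ∑ i, p t i * (r t i)^2 with hVdef
  have hc1 : 0 ≤ c1 := by
    rw [hc1def]
    exact Real.log_nonneg (by rw [le_div_iff₀ hγ1]; linarith)
  have hc2 : 0 ≤ c2 := by
    rw [hc2def]
    exact Real.log_nonneg (by rw [le_div_iff₀ hγ0]; linarith)
  have hcK : 0 ≤ cK := Real.log_nonneg hK1
  set A : ℕ → Finset ℕ := fun t => (Finset.Icc 1 (t-1)).filter (fun τ => idx τ = idx t)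
    with hAdef
  set φ : ℕ → ℕ := fun t => if h : (A t).Nonempty then (A t).max' h else 0 with hφdef
  set g : ℕ → ℝ := fun s => Real.log (pt (s+1) (idx s)) with hgdef
  have hAmem : ∀ t τ, τ ∈ A t ↔ (1 ≤ τ ∧ τ ≤ t - 1 ∧ idx τ = idx t) := by
    intro t τ
    simp [hAdef, Finset.mem_filter, Finset.mem_Icc, and_assoc]
  have hφmem : ∀ t, (A t).Nonempty → φ t ∈ A t := by
    intro t h
    simp only [hφdef, dif_pos h]
    exact (A t).max'_mem h
  have hφle : ∀ t, (A t).Nonempty → ∀ τ ∈ A t, τ ≤ φ t := by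
    intro t h τ hτ
    simp only [hφdef, dif_pos h]
    exact Finset.le_max' _ _ hτ
  set M : Finset ℕ := (Finset.Icc 2 T).filter (fun t => (A t).Nonempty) with hMdef
  set F2 : Finset ℕ := (Finset.Icc 2 T).filter (fun t => ¬ (A t).Nonempty) with hF2def
  have hMsub : ∀ t ∈ M, 2 ≤ t ∧ t ≤ T ∧ (A t).Nonempty := by
    intro t ht
    have h1 := Finset.mem_filter.mp ht
    have h2 := Finset.mem_Icc.mp h1.1
    exact ⟨h2.1, h2.2, h1.2⟩
  have hkey : ∀ a ∈ M, ∀ b ∈ M, a < b → φ a = φ b → False := by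
    intro a ha b hb hlt he
    obtain ⟨ha2, haT, hAa⟩ := hMsub a ha
    obtain ⟨hb2, hbT, hAb⟩ := hMsub b hb
    obtain ⟨ha1', ha2', ha3'⟩ := (hAmem a (φ a)).mp (hφmem a hAa)
    obtain ⟨hb1', hb2', hb3'⟩ := (hAmem b (φ b)).mp (hφmem b hAb)
    have hab : idx a = idx b := by
      rw [← ha3', he, hb3']
    have hmem : a ∈ A b := (hAmem b a).mpr ⟨by omega, by omega, hab⟩
    have := hφle b hAb a hmem
    omega
  have hinj : Set.InjOn φ ↑M := by
    intro a ha b hb hab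
    rcases lt_trichotomy a b with h|h|h
    · exact absurd hab (fun he => hkey a (Finset.mem_coe.mp ha) b (Finset.mem_coe.mp hb) h he)
    · exact h
    · exact absurd hab.symm
        (fun he => hkey b (Finset.mem_coe.mp hb) a (Finset.mem_coe.mp ha) h he)
  have hgnp : ∀ s ∈ Finset.Icc 1 T, g s ≤ 0 := by
    intro s hs
    have h12 := Finset.mem_Icc.mp hs
    exact Real.log_nonpos ((hptall (s+1) (by omega) (by omega)).1 _).le
      (hptle (s+1) (by omega) (by omega) _)
  have htele : ∑ s ∈ Finset.Icc 1 T, g s ≤ ∑ t ∈ M, g (φ t) := by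
    have himg : M.image φ ⊆ Finset.Icc 1 T := by
      intro s hs
      obtain ⟨t, htM, rfl⟩ := Finset.mem_image.mp hs
      obtain ⟨h2, hT', hA⟩ := hMsub t htM
      obtain ⟨h1', h2', _⟩ := (hAmem t (φ t)).mp (hφmem t hA)
      exact Finset.mem_Icc.mpr ⟨h1', by omega⟩
    have heq : ∑ t ∈ M, g (φ t) = ∑ s ∈ M.image φ, g s :=
      (Finset.sum_image (fun a ha b hb h =>
        hinj (Finset.mem_coe.mpr ha) (Finset.mem_coe.mpr hb) h)).symm
    rw [heq]
    have hmono := Finset.sum_le_sum_of_subset_of_nonneg (f := fun s => -(g s)) himg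
      (fun i hi _ => neg_nonneg.mpr (hgnp i hi))
    simp only [Finset.sum_neg_distrib] at hmono
    linarith
  -- per-round bounds for matched times
  have hMb : ∀ t ∈ M, -(Real.log (p t (idx t))) ≤ -(g (φ t)) +
      (if idx t = idx (t-1) then Real.log (1/(1-γ)) else Real.log ((T:ℝ)/γ)) := by
    intro t ht
    obtain ⟨ht2, htT, hAt⟩ := hMsub t ht
    have htIcc : t ∈ Finset.Icc 2 T := Finset.mem_Icc.mpr ⟨ht2, htT⟩
    obtain ⟨hm1, hm2, hm3⟩ := (hAmem t (φ t)).mp (hφmem t hAt)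
    by_cases hswt : idx t = idx (t-1)
    · rw [if_pos hswt]
      have hmeq : φ t = t - 1 := by
        have h1 : t - 1 ∈ A t := (hAmem t (t-1)).mpr ⟨by omega, le_rfl, hswt.symm⟩
        have := hφle t hAt (t-1) h1
        omega
      have ht1 : t - 1 + 1 = t := by omega
      have hge : g (φ t) = Real.log (pt t (idx t)) := by
        rw [hgdef]
        simp only
        rw [hmeq, ht1, ← hswt]
      rw [hge]
      linarith [hlink1 t htIcc (idx t)]
    · rw [if_neg hswt]
      have hmne : φ t ≠ t - 1 := by
        intro h
        exact hswt (by rw [← hm3, h])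
      have hge : g (φ t) = Real.log (pt (φ t + 1) (idx t)) := by
        rw [hgdef]
        simp only
        rw [hm3]
      rw [hge]
      linarith [hlink2 t htIcc (φ t + 1) (by omega) (by omega) (idx t)]
  have hF2b : ∀ t ∈ F2, -(Real.log (p t (idx t))) ≤
      Real.log K + Real.log ((T:ℝ)/γ) := by
    intro t ht
    have h1 := Finset.mem_filter.mp ht
    have h2 := Finset.mem_Icc.mp h1.1
    have := hlink2 t h1.1 1 le_rfl (by omega) (idx t)
    rw [hpt1 (idx t), one_div, Real.log_inv] at this
    linarith
  have hF2sw : ∀ t ∈ F2, ¬ (idx t = idx (t-1)) := by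
    intro t ht hsw
    have h1 := Finset.mem_filter.mp ht
    have h2 := Finset.mem_Icc.mp h1.1
    exact h1.2 ⟨t - 1, (hAmem t (t-1)).mpr ⟨by omega, le_rfl, hsw.symm⟩⟩
  -- cardinality facts
  have hswcard : ((Finset.Icc 2 T).filter (fun t => ¬ idx t = idx (t-1))).card ≤ S - 1 := by
    have he : (∑ t ∈ Finset.Icc 2 T, if idx t = idx (t - 1) then 0 else 1) =
        ((Finset.Icc 2 T).filter (fun t => ¬ idx t = idx (t-1))).card := by
      rw [Finset.sum_ite]
      simp
    omega
  have hncard : F2.card + 1 ≤ n := by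
    have h1n : (1:ℕ) ∉ F2 := by
      intro h
      have := Finset.mem_Icc.mp (Finset.mem_filter.mp h).1
      omega
    have hFsub : insert 1 F2 ⊆ Finset.Icc 1 T := by
      intro x hx
      rcases Finset.mem_insert.mp hx with rfl | hx
      · exact Finset.mem_Icc.mpr ⟨le_rfl, by omega⟩
      · have := Finset.mem_Icc.mp (Finset.mem_filter.mp hx).1
        exact Finset.mem_Icc.mpr ⟨by omega, this.2⟩
    have hinjF : ∀ a ∈ insert 1 F2, ∀ b ∈ insert 1 F2, a < b → idx a = idx b → False := by
      intro a ha b hb hlt he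
      have hb2 : b ∈ F2 := by
        rcases Finset.mem_insert.mp hb with rfl | h
        · have : 1 ≤ a := (Finset.mem_Icc.mp (hFsub ha)).1
          omega
        · exact h
      have hbf := Finset.mem_filter.mp hb2
      have hb' := Finset.mem_Icc.mp hbf.1
      have ha' := Finset.mem_Icc.mp (hFsub ha)
      exact hbf.2 ⟨a, (hAmem b a).mpr ⟨ha'.1, by omega, he⟩⟩
    have hcardF : (insert 1 F2).card ≤ ((Finset.Icc 1 T).image idx).card := by
      apply Finset.card_le_card_of_injOn idx
      · intro a ha
        exact Finset.mem_image.mpr ⟨a, hFsub ha, rfl⟩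
      · intro a ha b hb he
        rcases lt_trichotomy a b with h|h|h
        · exact absurd he
            (fun he' => hinjF a (Finset.mem_coe.mp ha) b (Finset.mem_coe.mp hb) h he')
        · exact h
        · exact absurd he.symm
            (fun he' => hinjF b (Finset.mem_coe.mp hb) a (Finset.mem_coe.mp ha) h he')
    rw [Finset.card_insert_of_notMem h1n] at hcardF
    omega
  -- assemble everything
  set cost : ℕ → ℝ := fun t => if idx t = idx (t-1) then c1 else c2 with hcostdef
  have hIc : Finset.Icc 1 T = insert 1 (Finset.Icc 2 T) := by
    ext x
    simp only [Finset.mem_Icc, Finset.mem_insert]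
    omega
  have hA1 : ∑ t ∈ Finset.Icc 1 T, η * r t (idx t) ≤
      (∑ t ∈ Finset.Icc 1 T, g t) +
      (∑ t ∈ Finset.Icc 1 T, -(Real.log (p t (idx t)))) + η^2 * V := by
    have h1 : ∀ t ∈ Finset.Icc 1 T, η * r t (idx t) ≤
        g t + -(Real.log (p t (idx t))) + η^2 * ∑ i, p t i * (r t i)^2 := by
      intro t ht
      have h2 := hround t ht (idx t)
      have h3 : g t = Real.log (pt (t+1) (idx t)) := by rw [hgdef]
      linarith
    calc ∑ t ∈ Finset.Icc 1 T, η * r t (idx t)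
        ≤ ∑ t ∈ Finset.Icc 1 T,
            (g t + -(Real.log (p t (idx t))) + η^2 * ∑ i, p t i * (r t i)^2) :=
          Finset.sum_le_sum h1
      _ = (∑ t ∈ Finset.Icc 1 T, g t) +
            (∑ t ∈ Finset.Icc 1 T, -(Real.log (p t (idx t)))) + η^2 * V := by
          rw [Finset.sum_add_distrib, Finset.sum_add_distrib, ← Finset.mul_sum, hVdef]
  have hB6 : -(Real.log (p 1 (idx 1))) = cK := by
    rw [hp1, hpt1, one_div, Real.log_inv, neg_neg, hcKdef]
  have hB7 : ∑ t ∈ Finset.Icc 1 T, -(Real.log (p t (idx t))) =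
      cK + ∑ t ∈ Finset.Icc 2 T, -(Real.log (p t (idx t))) := by
    rw [hIc, Finset.sum_insert (by simp), hB6]
  have hB1 : ∑ t ∈ Finset.Icc 2 T, -(Real.log (p t (idx t))) =
      (∑ t ∈ M, -(Real.log (p t (idx t)))) + (∑ t ∈ F2, -(Real.log (p t (idx t)))) :=
    (Finset.sum_filter_add_sum_filter_not _ _ _).symm
  have hB2 : ∑ t ∈ M, -(Real.log (p t (idx t))) ≤
      (∑ t ∈ M, -(g (φ t))) + ∑ t ∈ M, cost t := by
    have h1 := Finset.sum_le_sum hMb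
    rw [Finset.sum_add_distrib] at h1
    exact h1
  have hB3 : ∑ t ∈ F2, -(Real.log (p t (idx t))) ≤
      (F2.card : ℝ) * cK + ∑ t ∈ F2, cost t := by
    have h1 : ∀ t ∈ F2, -(Real.log (p t (idx t))) ≤ cK + cost t := by
      intro t ht
      have h2 := hF2b t ht
      have h3 : cost t = c2 := by
        rw [hcostdef]
        exact if_neg (hF2sw t ht)
      rw [h3]
      linarith
    calc ∑ t ∈ F2, -(Real.log (p t (idx t))) ≤ ∑ t ∈ F2, (cK + cost t) :=
          Finset.sum_le_sum h1
      _ = (F2.card : ℝ) * cK + ∑ t ∈ F2, cost t := by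
          rw [Finset.sum_add_distrib, Finset.sum_const, nsmul_eq_mul]
  have hB4 : (∑ t ∈ M, cost t) + (∑ t ∈ F2, cost t) = ∑ t ∈ Finset.Icc 2 T, cost t :=
    Finset.sum_filter_add_sum_filter_not _ _ _
  have hB5 : ∑ t ∈ Finset.Icc 2 T, cost t ≤ (T:ℝ)*c1 + (S:ℝ)*c2 := by
    have hrw : ∑ t ∈ Finset.Icc 2 T, cost t =
        (((Finset.Icc 2 T).filter (fun t => idx t = idx (t-1))).card : ℝ) * c1 +
        (((Finset.Icc 2 T).filter (fun t => ¬ idx t = idx (t-1))).card : ℝ) * c2 := by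
      rw [hcostdef]
      rw [Finset.sum_ite, Finset.sum_const, Finset.sum_const, nsmul_eq_mul, nsmul_eq_mul]
    rw [hrw]
    have e1 : (((Finset.Icc 2 T).filter (fun t => idx t = idx (t-1))).card : ℝ) ≤ (T:ℝ) := by
      have h1 : ((Finset.Icc 2 T).filter (fun t => idx t = idx (t-1))).card ≤ T := by
        calc ((Finset.Icc 2 T).filter (fun t => idx t = idx (t-1))).card
            ≤ (Finset.Icc 2 T).card := Finset.card_filter_le _ _
          _ ≤ T := by rw [Nat.card_Icc]; omega
      exact_mod_cast h1
    have e2 : (((Finset.Icc 2 T).filter (fun t => ¬ idx t = idx (t-1))).card : ℝ) ≤ (S:ℝ) := by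
      have h1 : ((Finset.Icc 2 T).filter (fun t => ¬ idx t = idx (t-1))).card ≤ S := by omega
      exact_mod_cast h1
    have f1 := mul_le_mul_of_nonneg_right e1 hc1
    have f2 := mul_le_mul_of_nonneg_right e2 hc2
    linarith
  have hB8 : ((F2.card : ℝ) + 1) * cK ≤ (n:ℝ) * cK := by
    have h1 : ((F2.card : ℝ) + 1) ≤ (n:ℝ) := by exact_mod_cast hncard
    exact mul_le_mul_of_nonneg_right h1 hcK
  have hneg : ∑ t ∈ M, -(g (φ t)) = -(∑ t ∈ M, g (φ t)) := by
    rw [Finset.sum_neg_distrib]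
  have hmain : η * ∑ t ∈ Finset.Icc 1 T, r t (idx t) ≤
      ((n:ℝ) * cK + (T:ℝ)*c1 + (S:ℝ)*c2) + η^2 * V := by
    rw [Finset.mul_sum]
    linarith [hA1, hB7, hB1, hB2, hB3, hB4, hB5, hB8, htele, hneg]
  have hfin : η * ((((n:ℝ) * cK + (T:ℝ)*c1 + (S:ℝ)*c2)) / η + η * V) =
      ((n:ℝ) * cK + (T:ℝ)*c1 + (S:ℝ)*c2) + η^2 * V := by
    field_simp
  have hgoal : ∑ t ∈ Finset.Icc 1 T, r t (idx t) ≤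
      (((n:ℝ) * cK + (T:ℝ)*c1 + (S:ℝ)*c2)) / η + η * V := by
    have h2 : η * (∑ t ∈ Finset.Icc 1 T, r t (idx t)) ≤
        η * ((((n:ℝ) * cK + (T:ℝ)*c1 + (S:ℝ)*c2)) / η + η * V) := by
      rw [hfin]
      exact hmain
    exact le_of_mul_le_mul_left h2 hη0
  exact hgoal
end
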